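/- arXiv:1801.07771 — 6 statements merged into one kernel-verified Lean document; each statement's English description precedes it below -/
import Mathlib

section
/- Let K be an infinite field of characteristic different from 2 and 3, let A be an associative unital K-algebra, and let n ≥ 2. Then for every f ∈ T^{(n)}(A) and all a, b ∈ A, both [[f, a], b] and [f, [a, b]] belong to T^{(n+2)}(A). -/
/-- The right-normed commutator: `rnComm a [b₁, …, b_k] = [a, b₁, …, b_k]`,
where `[u, v] = u * v - v * u`. -/
def rnComm {A : Type*} [Ring A] : A → List A → A
  | a, [] => a
  | a, b :: l => rnComm (a * b - b * a) l

/-- `Tideal A m` is the two-sided ideal `T⁽ᵐ⁾(A)` of `A` generated by all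
right-normed commutators `[a₁, …, a_m]` of length `m`. -/
def Tideal (A : Type*) [Ring A] (m : ℕ) : TwoSidedIdeal A :=
  TwoSidedIdeal.span { x | ∃ (a : A) (l : List A), l.length + 1 = m ∧ rnComm a l = x }

/-! Work modulo `I = T⁽ⁿ⁺²⁾(A)`. Every generator of `T⁽ⁿ⁾(A)` has the form `[e, t]` with
`[[[e, u], v], w] ∈ I` for all `u, v, w`, so each `g = [e, u]` satisfies `[[g, v], w] ≡ 0`.
For such `g`, expanding `[[g, p q], w]` gives `[g, p][q, w] ≡ -[g, q][p, w]`, whence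
`[[g w, a], b] ≡ g [[w, a], b]`. Expanding `[[[e, p q], v], w]` with this rule shows that
`ψ(p, q, v, w) = [e, p][[q, v], w]` is antisymmetric in `p, q`; it is also antisymmetric in `q, v`
and satisfies the Jacobi identity in `q, v, w`, which forces it to be alternating in all four
arguments, so that the Jacobi identity reads `3 ψ ≡ 0`. Writing
`u [e, t] v = [e, t] u v - [[e, t], u] v`, it follows that `[[u [e, t] v, a], b] ∈ I`, and
this passes to the whole ideal `T⁽ⁿ⁾(A)` by additivity. Finally
`[f, [a, b]] = [[f, a], b] - [[f, b], a]`. -/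

section Alternating

variable {X M : Type*} [AddCommGroup M]

theorem three_nsmul_eq_zero_of_antisymm_of_jacobi (ψ : X → X → X → X → M)
    (h12 : ∀ p q v w, ψ p q v w = -ψ q p v w) (h23 : ∀ p q v w, ψ p q v w = -ψ p v q w)
    (jacobi : ∀ p q v w, ψ p q v w + ψ p v w q + ψ p w q v = 0) (p q v w : X) :
    3 • ψ p q v w = 0 := by
  have h13 : ∀ p q v w, ψ p q v w = -ψ v q p w := fun p q v w => by
    rw [h12 p, h23 q, h12 q, neg_neg]
  have h14 : ∀ p q v w, ψ p q v w = -ψ w q v p := fun p q v w => by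
    have h := jacobi w p q v
    rw [h12 w p, h13 w v p] at h
    linear_combination (norm := abel) jacobi p w q v + h
  have cycle : ∀ p q v w, ψ p v w q = ψ p q v w := fun p q v w => by
    rw [h14 p q, h14 p v w q, h12 q, h13 v, neg_neg]
  rw [← jacobi p q v w, cycle p v w q, cycle p q v w]
  abel

end Alternating

section SecondCenter

variable {R : Type*} [Ring R] {g : R}

theorem lie_lie_right_eq_zero (hg : ∀ v w : R, ⁅⁅g, v⁆, w⁆ = 0) (v w : R) : ⁅g, ⁅v, w⁆⁆ = 0 := by
  have h : ⁅g, ⁅v, w⁆⁆ = ⁅⁅g, v⁆, w⁆ - ⁅⁅g, w⁆, v⁆ := by simp only [Ring.lie_def]; noncomm_ring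
  rw [h, hg, hg, sub_zero]

theorem lie_mul_lie_add_lie_mul_lie_eq_zero (hg : ∀ v w : R, ⁅⁅g, v⁆, w⁆ = 0) (p q w : R) :
    ⁅g, p⁆ * ⁅q, w⁆ + ⁅g, q⁆ * ⁅p, w⁆ = 0 := by
  have h : ⁅⁅g, p * q⁆, w⁆ = ⁅⁅g, p⁆, w⁆ * q + (⁅g, p⁆ * ⁅q, w⁆ + ⁅g, q⁆ * ⁅p, w⁆) -
      ⁅⁅g, q⁆, ⁅p, w⁆⁆ + p * ⁅⁅g, q⁆, w⁆ := by
    simp only [Ring.lie_def]; noncomm_ring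
  simpa only [hg, zero_mul, mul_zero, zero_add, add_zero, sub_zero, eq_comm] using h

theorem lie_mul_lie_lie_eq_zero (hg : ∀ v w : R, ⁅⁅g, v⁆, w⁆ = 0) (u v a b : R) :
    ⁅g, u⁆ * ⁅⁅v, a⁆, b⁆ = 0 := by
  simpa only [lie_lie_right_eq_zero hg, zero_mul, add_zero] using
    lie_mul_lie_add_lie_mul_lie_eq_zero hg u ⁅v, a⁆ b

theorem lie_lie_mul_left (hg : ∀ v w : R, ⁅⁅g, v⁆, w⁆ = 0) (w a b : R) :
    ⁅⁅g * w, a⁆, b⁆ = g * ⁅⁅w, a⁆, b⁆ := by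
  have h : ⁅⁅g * w, a⁆, b⁆ = ⁅⁅g, a⁆, b⁆ * w + (⁅g, a⁆ * ⁅w, b⁆ + ⁅g, w⁆ * ⁅a, b⁆) +
      (⁅g, b⁆ * ⁅w, a⁆ + ⁅g, w⁆ * ⁅b, a⁆) + g * ⁅⁅w, a⁆, b⁆ := by
    simp only [Ring.lie_def]; noncomm_ring
  rw [h, hg, lie_mul_lie_add_lie_mul_lie_eq_zero hg, lie_mul_lie_add_lie_mul_lie_eq_zero hg,
    zero_mul, zero_add, add_zero, zero_add]

theorem lie_lie_mul_right (hg : ∀ v w : R, ⁅⁅g, v⁆, w⁆ = 0) (w a b : R) :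
    ⁅⁅w * g, a⁆, b⁆ = g * ⁅⁅w, a⁆, b⁆ := by
  have h : ⁅⁅w * g, a⁆, b⁆ = ⁅⁅g * w, a⁆, b⁆ - ⁅⁅⁅g, w⁆, a⁆, b⁆ := by
    simp only [Ring.lie_def]; noncomm_ring
  rw [h, lie_lie_mul_left hg, hg, (Commute.zero_left b).lie_eq, sub_zero]

end SecondCenter

section ThirdCenter

variable {R : Type*} [Ring R] {e : R}

theorem lie_mul_lie_lie_add_lie_mul_lie_lie_eq_zero (he : ∀ u v w : R, ⁅⁅⁅e, u⁆, v⁆, w⁆ = 0)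
    (p q v w : R) : ⁅e, p⁆ * ⁅⁅q, v⁆, w⁆ + ⁅e, q⁆ * ⁅⁅p, v⁆, w⁆ = 0 := by
  have h : ⁅⁅⁅e, p * q⁆, v⁆, w⁆ = ⁅⁅⁅e, p⁆ * q, v⁆, w⁆ + ⁅⁅p * ⁅e, q⁆, v⁆, w⁆ := by
    simp only [Ring.lie_def]; noncomm_ring
  rwa [he, lie_lie_mul_left (he p), lie_lie_mul_right (he q), eq_comm] at h

theorem lie_mul_lie_lie_eq_zero_of_isUnit_three (he : ∀ u v w : R, ⁅⁅⁅e, u⁆, v⁆, w⁆ = 0)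
    (h3 : IsUnit (3 : R)) (p q v w : R) : ⁅e, p⁆ * ⁅⁅q, v⁆, w⁆ = 0 := by
  have h := three_nsmul_eq_zero_of_antisymm_of_jacobi (fun p q v w => ⁅e, p⁆ * ⁅⁅q, v⁆, w⁆)
    (fun p q v w => eq_neg_of_add_eq_zero_left
      (lie_mul_lie_lie_add_lie_mul_lie_lie_eq_zero he p q v w))
    (fun p q v w => by simp only [Ring.lie_def]; noncomm_ring)
    (fun p q v w => by simp only [Ring.lie_def]; noncomm_ring) p q v w
  rwa [nsmul_eq_mul, Nat.cast_ofNat, h3.mul_right_eq_zero] at h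

theorem lie_lie_mul_lie_mul_eq_zero (he : ∀ u v w : R, ⁅⁅⁅e, u⁆, v⁆, w⁆ = 0)
    (h3 : IsUnit (3 : R)) (t u v a b : R) : ⁅⁅u * ⁅e, t⁆ * v, a⁆, b⁆ = 0 := by
  have hc : ∀ x y : R, ⁅⁅⁅⁅e, t⁆, u⁆, x⁆, y⁆ = 0 := fun x y => by
    rw [he, (Commute.zero_left y).lie_eq]
  have h : ⁅⁅u * ⁅e, t⁆ * v, a⁆, b⁆ =
      ⁅⁅⁅e, t⁆ * (u * v), a⁆, b⁆ - ⁅⁅⁅⁅e, t⁆, u⁆ * v, a⁆, b⁆ := by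
    simp only [Ring.lie_def]; noncomm_ring
  rw [h, lie_lie_mul_left (he t), lie_lie_mul_left hc, lie_mul_lie_lie_eq_zero (he t),
    lie_mul_lie_lie_eq_zero_of_isUnit_three he h3, sub_zero]

end ThirdCenter

section Tideal

variable {A : Type*} [Ring A]

theorem TwoSidedIdeal.lie_lie_mul_lie_mul_mem (I : TwoSidedIdeal A) {e : A}
    (he : ∀ u v w : A, ⁅⁅⁅e, u⁆, v⁆, w⁆ ∈ I) (h3 : IsUnit (3 : A)) (t u v a b : A) :
    ⁅⁅u * ⁅e, t⁆ * v, a⁆, b⁆ ∈ I := by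
  set π := I.ringCon.mk'
  have mem_iff : ∀ x, x ∈ I ↔ π x = 0 := fun x => by
    conv_lhs => rw [← ker_ringCon_mk' I]
    exact mem_ker _
  have map_lie : ∀ x y, π ⁅x, y⁆ = ⁅π x, π y⁆ := fun x y => by
    simp only [Ring.lie_def, map_sub, map_mul]
  have he' : ∀ u v w : I.ringCon.Quotient, ⁅⁅⁅π e, u⁆, v⁆, w⁆ = 0 := by
    intro u v w
    obtain ⟨u, rfl⟩ := I.ringCon.mk'_surjective u
    obtain ⟨v, rfl⟩ := I.ringCon.mk'_surjective v
    obtain ⟨w, rfl⟩ := I.ringCon.mk'_surjective w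
    simpa only [mem_iff, map_lie] using he u v w
  have h3' : IsUnit (3 : I.ringCon.Quotient) := by
    rw [← map_ofNat π 3]
    exact h3.map π
  rw [mem_iff]
  simpa only [map_lie, map_mul] using
    lie_lie_mul_lie_mul_eq_zero he' h3' (π t) (π u) (π v) (π a) (π b)

theorem rnComm_append_singleton (a : A) (l : List A) (b : A) :
    rnComm a (l ++ [b]) = ⁅rnComm a l, b⁆ := by
  induction l generalizing a with
  | nil => rfl
  | cons c l ih => exact ih _

theorem rnComm_mem_Tideal {m : ℕ} (a : A) (l : List A) (h : l.length + 1 = m) :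
    rnComm a l ∈ Tideal A m :=
  TwoSidedIdeal.subset_span ⟨a, l, h, rfl⟩

theorem lie_lie_mem_Tideal_add_two (h3 : IsUnit (3 : A)) {n : ℕ} (hn : 2 ≤ n) {f : A}
    (hf : f ∈ Tideal A n) (a b : A) : ⁅⁅f, a⁆, b⁆ ∈ Tideal A (n + 2) := by
  rw [Tideal, TwoSidedIdeal.mem_span_iff_mem_addSubgroup_closure] at hf
  induction hf using AddSubgroup.closure_induction generalizing a b with
  | mem x hx =>
    obtain ⟨_, ⟨u, -, _, ⟨c, l, hl, rfl⟩, rfl⟩, v, -, rfl⟩ := hx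
    obtain ⟨L, t, rfl⟩ : ∃ L t, l = L ++ [t] :=
      l.eq_nil_or_concat'.resolve_left (by rintro rfl; simp only [List.length_nil] at hl; omega)
    rw [rnComm_append_singleton]
    refine (Tideal A (n + 2)).lie_lie_mul_lie_mul_mem (fun p q r => ?_) h3 t u v a b
    simp only [← rnComm_append_singleton, List.append_assoc]
    refine rnComm_mem_Tideal _ _ ?_
    simp only [List.length_append, List.length_cons, List.length_nil] at hl ⊢
    omega
  | zero => simpa only [Ring.lie_def, zero_mul, mul_zero, sub_zero] using zero_mem _
  | add x y _ _ hx hy =>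
    have h : ⁅⁅x + y, a⁆, b⁆ = ⁅⁅x, a⁆, b⁆ + ⁅⁅y, a⁆, b⁆ := by
      simp only [Ring.lie_def]; noncomm_ring
    exact h ▸ add_mem (hx a b) (hy a b)
  | neg x _ hx =>
    have h : ⁅⁅-x, a⁆, b⁆ = -⁅⁅x, a⁆, b⁆ := by
      simp only [Ring.lie_def]; noncomm_ring
    exact h ▸ neg_mem (hx a b)

end Tideal

theorem comm_Tideal_mem_general
    (K : Type*) [Field K] (h3 : (3 : K) ≠ 0)
    (A : Type*) [Ring A] [Algebra K A]
    (n : ℕ) (hn : 2 ≤ n) (f : A) (hf : f ∈ Tideal A n) (a b : A) :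
    ((f * a - a * f) * b - b * (f * a - a * f)) ∈ Tideal A (n + 2) ∧
    (f * (a * b - b * a) - (a * b - b * a) * f) ∈ Tideal A (n + 2) := by
  have h3A : IsUnit (3 : A) := by
    simpa only [map_ofNat] using (IsUnit.mk0 _ h3).map (algebraMap K A)
  have key : ∀ a b, ⁅⁅f, a⁆, b⁆ ∈ Tideal A (n + 2) := lie_lie_mem_Tideal_add_two h3A hn hf
  have h : f * (a * b - b * a) - (a * b - b * a) * f = ⁅⁅f, a⁆, b⁆ - ⁅⁅f, b⁆, a⁆ := by
    simp only [Ring.lie_def]; noncomm_ring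
  exact ⟨key a b, h ▸ sub_mem (key a b) (key b a)⟩

/-- **Lemma 1.3.** For any associative unital algebra `A` over an infinite field of
characteristic `≠ 2, 3`, any `n ≥ 2`, any `f ∈ T⁽ⁿ⁾(A)` and any `a, b ∈ A`, both
`[[f, a], b]` and `[f, [a, b]]` lie in `T⁽ⁿ⁺²⁾(A)`. -/
theorem comm_Tideal_mem
    (K : Type*) [Field K] [Infinite K] (h2 : (2 : K) ≠ 0) (h3 : (3 : K) ≠ 0)
    (A : Type*) [Ring A] [Algebra K A]
    (n : ℕ) (hn : 2 ≤ n) (f : A) (hf : f ∈ Tideal A n) (a b : A) :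
    ((f * a - a * f) * b - b * (f * a - a * f)) ∈ Tideal A (n + 2) ∧
    (f * (a * b - b * a) - (a * b - b * a) * f) ∈ Tideal A (n + 2) :=
  comm_Tideal_mem_general K h3 A n hn f hf a b
end

section
/- Let K be an infinite field of characteristic different from 2 and 3, and let F₄ be the free associative unital K-algebra on four generators x, y, z, t. Then the element [x, y]·[z, t] does NOT belong to T^{(3)}(F₄). (Hence the restriction to rank 3 in the theorem T^{(m)}·T^{(n)} ⊆ T^{(m+n-1)} is essential.) -/
theorem map_rnComm {A B : Type*} [Ring A] [Ring B] (f : A →+* B) (a : A) (l : List A) :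
    f (rnComm a l) = rnComm (f a) (l.map f) := by
  induction l generalizing a with
  | nil => rfl
  | cons b l ih => simp [rnComm, ih]

theorem Tideal_le_ker {A B : Type*} [Ring A] [Ring B] (f : A →+* B) {m : ℕ}
    (hB : ∀ (b : B) (l : List B), l.length + 1 = m → rnComm b l = 0) :
    Tideal A m ≤ TwoSidedIdeal.ker f := by
  refine TwoSidedIdeal.span_le.mpr ?_
  rintro _ ⟨a, l, hl, rfl⟩
  rw [SetLike.mem_coe, TwoSidedIdeal.mem_ker, map_rnComm]
  exact hB _ _ (by simpa using hl)

namespace ExteriorAlgebra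

open CliffordAlgebra

variable {R M : Type*} [CommRing R] [AddCommGroup M] [Module R M]

theorem mul_eq_smul_mul_of_mem_evenOdd {i j : ZMod 2} {x y : ExteriorAlgebra R M}
    (hx : x ∈ evenOdd 0 i) (hy : y ∈ evenOdd 0 j) :
    x * y = (-1 : ℤˣ) ^ (j * i) • (y * x) := by
  simpa [map_id] using map_mul_map_of_isOrtho_of_mem_evenOdd (QuadraticMap.Isometry.id _)
    (QuadraticMap.Isometry.id _) (fun _ _ => QuadraticMap.IsOrtho.all _ _) x y hx hy

theorem commute_of_mem_evenOdd_zero {x : ExteriorAlgebra R M} (hx : x ∈ evenOdd 0 0)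
    (y : ExteriorAlgebra R M) : Commute x y := by
  induction y using DirectSum.Decomposition.inductionOn (evenOdd (0 : QuadraticForm R M)) with
  | zero => exact Commute.zero_right x
  | homogeneous y =>
    show x * y = y * x
    simpa using mul_eq_smul_mul_of_mem_evenOdd hx y.2
  | add y y' hy hy' => exact hy.add_right hy'

theorem mul_sub_mul_mem_evenOdd_zero (x y : ExteriorAlgebra R M) :
    x * y - y * x ∈ evenOdd 0 0 := by
  induction x using DirectSum.Decomposition.inductionOn (evenOdd (0 : QuadraticForm R M)) with
  | zero => simp
  | add x x' hx hx' =>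
    rw [show (x + x') * y - y * (x + x') = (x * y - y * x) + (x' * y - y * x') by noncomm_ring]
    exact add_mem hx hx'
  | @homogeneous i x =>
  induction y using DirectSum.Decomposition.inductionOn (evenOdd (0 : QuadraticForm R M)) with
  | zero => simp
  | add y y' hy hy' =>
    rw [show (x : ExteriorAlgebra R M) * (y + y') - (y + y') * x
      = (x * y - y * x) + (x * y' - y' * x) by noncomm_ring]
    exact add_mem hy hy'
  | @homogeneous j y =>
    obtain ⟨x, hx⟩ := x
    obtain ⟨y, hy⟩ := y
    obtain rfl | rfl := (by decide : ∀ k : ZMod 2, k = 0 ∨ k = 1) i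
    · simp [(commute_of_mem_evenOdd_zero hx y).eq]
    obtain rfl | rfl := (by decide : ∀ k : ZMod 2, k = 0 ∨ k = 1) j
    · simp [(commute_of_mem_evenOdd_zero hy x).eq]
    have hanti : y * x = -(x * y) := by
      rw [mul_eq_smul_mul_of_mem_evenOdd hy hx, mul_one, uzpow_one, Units.neg_smul, one_smul]
    have hxy : x * y ∈ evenOdd 0 (1 + 1) := SetLike.mul_mem_graded hx hy
    rw [hanti, sub_neg_eq_add]
    exact add_mem hxy hxy

theorem commute_mul_sub_mul (x y z : ExteriorAlgebra R M) : Commute (x * y - y * x) z :=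
  commute_of_mem_evenOdd_zero (mul_sub_mul_mem_evenOdd_zero x y) z

theorem rnComm_eq_zero_of_length_eq_two (a : ExteriorAlgebra R M)
    {l : List (ExteriorAlgebra R M)} (hl : l.length = 2) : rnComm a l = 0 := by
  match l, hl with
  | [b, c], _ => exact sub_eq_zero.mpr (commute_mul_sub_mul a b c).eq

theorem ι_mul_ι_sub_swap (u v : M) :
    ι R u * ι R v - ι R v * ι R u = (2 : R) • (ι R u * ι R v) := by
  rw [eq_neg_of_add_eq_zero_left (ι_add_mul_swap v u), sub_neg_eq_add, two_smul]

theorem ιMulti_ne_zero_of_basis [Nontrivial R] {n : ℕ} (b : Module.Basis (Fin n) R M) :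
    ιMulti R n b ≠ 0 := by
  intro h
  have := congrArg (liftAlternating (Pi.single n b.det)) h
  simp [liftAlternating_apply_ιMulti, Module.Basis.det_self] at this

end ExteriorAlgebra

open ExteriorAlgebra in
theorem comm_mul_comm_not_mem_T3_general
    (K : Type*) [Field K] (h2 : (2 : K) ≠ 0)
    (x y z t : FreeAlgebra K (Fin 4))
    (hx : x = FreeAlgebra.ι K 0) (hy : y = FreeAlgebra.ι K 1)
    (hz : z = FreeAlgebra.ι K 2) (ht : t = FreeAlgebra.ι K 3) :
    (x * y - y * x) * (z * t - t * z) ∉ Tideal (FreeAlgebra K (Fin 4)) 3 := by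
  set e := Pi.basisFun K (Fin 4)
  let φ : FreeAlgebra K (Fin 4) →ₐ[K] ExteriorAlgebra K (Fin 4 → K) :=
    FreeAlgebra.lift K (ι K ∘ e)
  have hφ : φ ((x * y - y * x) * (z * t - t * z)) = (2 * 2 : K) • ιMulti K 4 e := by
    simp only [hx, hy, hz, ht, map_sub, map_mul, φ, FreeAlgebra.lift_ι_apply,
      Function.comp_apply, ι_mul_ι_sub_swap, smul_mul_smul_comm, ιMulti_apply, List.ofFn_succ,
      List.ofFn_zero, List.prod_cons, List.prod_nil, mul_one, mul_assoc]
    rfl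
  intro hmem
  have hker := Tideal_le_ker φ.toRingHom
    (fun a l hl => rnComm_eq_zero_of_length_eq_two a (by omega)) hmem
  rw [TwoSidedIdeal.mem_ker] at hker
  exact smul_ne_zero (mul_ne_zero h2 h2) (ιMulti_ne_zero_of_basis e) (hφ ▸ hker)

/-- In the free associative unital algebra on four generators `x, y, z, t` over an infinite
field of characteristic `≠ 2, 3`, the element `[x, y]·[z, t]` does not belong to `T⁽³⁾`;
hence the rank restriction in Theorem 1 is essential. -/
theorem comm_mul_comm_not_mem_T3
    (K : Type*) [Field K] [Infinite K] (h2 : (2 : K) ≠ 0) (h3 : (3 : K) ≠ 0)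
    (x y z t : FreeAlgebra K (Fin 4))
    (hx : x = FreeAlgebra.ι K 0) (hy : y = FreeAlgebra.ι K 1)
    (hz : z = FreeAlgebra.ι K 2) (ht : t = FreeAlgebra.ι K 3) :
    (x * y - y * x) * (z * t - t * z) ∉ Tideal (FreeAlgebra K (Fin 4)) 3 :=
  comm_mul_comm_not_mem_T3_general K h2 x y z t hx hy hz ht
end

section
/- Let K be an infinite field of characteristic different from 2 and 3. Let F₃^{(3)} = F₃ / T^{(3)}(F₃) be the relatively free algebra of rank 3 with generators x, y, z, and let F^{(3)} = F / T^{(3)}(F) where F is free on countably many generators x₀, x₁, x₂, …. Then the image of [x, y]·z is central in F₃^{(3)}, but the image of [x₀, x₁]·x₂ is NOT central in F^{(3)}. -/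
section IdealLemmas

/-- Every `[[a,b],c]` is a generator of `T⁽³⁾`. -/
lemma genT {A : Type*} [Ring A] (a b c : A) :
    (a * b - b * a) * c - c * (a * b - b * a) ∈ Tideal A 3 := by
  apply TwoSidedIdeal.subset_span
  exact ⟨a, [b, c], rfl, rfl⟩

lemma wmem {A : Type*} [Ring A] (a b c d : A) :
    (a * b - b * a) * (c * d - d * c) + (b * d - d * b) * (a * c - c * a) ∈ Tideal A 3 := by
  have key : (a * b - b * a) * (c * d - d * c) + (b * d - d * b) * (a * c - c * a) =
      ((a * (b*c) - (b*c) * a) * d - d * (a * (b*c) - (b*c) * a))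
      - b * ((a * c - c * a) * d - d * (a * c - c * a))
      - ((a * b - b * a) * d - d * (a * b - b * a)) * c := by noncomm_ring
  rw [key]
  exact TwoSidedIdeal.sub_mem _ (TwoSidedIdeal.sub_mem _ (genT _ _ _)
    (TwoSidedIdeal.mul_mem_left _ _ _ (genT _ _ _)))
    (TwoSidedIdeal.mul_mem_right _ _ _ (genT _ _ _))

lemma sqmem {A : Type*} [Ring A] (a b c : A) :
    (a * b - b * a) * (c * b - b * c) ∈ Tideal A 3 := by
  have := wmem a b c b
  simpa using this

end IdealLemmas

section RankThree

variable {K : Type*} [Field K]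

open FreeAlgebra

/-- The key induction: `[x,y]·[z,f] ∈ T⁽³⁾(F₃)` for every `f`. -/
lemma mainT (f : FreeAlgebra K (Fin 3)) :
    (ι K 0 * ι K 1 - ι K 1 * ι K 0) * (ι K 2 * f - f * ι K 2)
      ∈ Tideal (FreeAlgebra K (Fin 3)) 3 := by
  set X : FreeAlgebra K (Fin 3) := ι K 0 with hX
  set Y : FreeAlgebra K (Fin 3) := ι K 1 with hY
  set Z : FreeAlgebra K (Fin 3) := ι K 2 with hZ
  induction f using FreeAlgebra.induction with
  | grade0 r =>
    have : Z * algebraMap K (FreeAlgebra K (Fin 3)) r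
        - algebraMap K (FreeAlgebra K (Fin 3)) r * Z = 0 := by
      rw [Algebra.commutes, sub_self]
    rw [this, mul_zero]
    exact TwoSidedIdeal.zero_mem _
  | grade1 i =>
    fin_cases i
    · show (X * Y - Y * X) * (Z * X - X * Z) ∈ Tideal (FreeAlgebra K (Fin 3)) 3
      have h : (X * Y - Y * X) * (Z * X - X * Z)
          = -((Y * X - X * Y) * (Z * X - X * Z)) := by noncomm_ring
      rw [h]
      exact TwoSidedIdeal.neg_mem _ (sqmem Y X Z)
    · show (X * Y - Y * X) * (Z * Y - Y * Z) ∈ Tideal (FreeAlgebra K (Fin 3)) 3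
      exact sqmem X Y Z
    · show (X * Y - Y * X) * (Z * Z - Z * Z) ∈ Tideal (FreeAlgebra K (Fin 3)) 3
      rw [sub_self, mul_zero]
      exact TwoSidedIdeal.zero_mem _
  | mul f g hf hg =>
    have key : (X * Y - Y * X) * (Z * (f * g) - f * g * Z)
        = f * ((X * Y - Y * X) * (Z * g - g * Z))
          + ((X * Y - Y * X) * f - f * (X * Y - Y * X)) * (Z * g - g * Z)
          + ((X * Y - Y * X) * (Z * f - f * Z)) * g := by noncomm_ring
    rw [key]
    exact TwoSidedIdeal.add_mem _
      (TwoSidedIdeal.add_mem _ (TwoSidedIdeal.mul_mem_left _ _ _ hg)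
        (TwoSidedIdeal.mul_mem_right _ _ _ (genT X Y f)))
      (TwoSidedIdeal.mul_mem_right _ _ _ hf)
  | add f g hf hg =>
    have key : (X * Y - Y * X) * (Z * (f + g) - (f + g) * Z)
        = (X * Y - Y * X) * (Z * f - f * Z) + (X * Y - Y * X) * (Z * g - g * Z) := by
      noncomm_ring
    rw [key]
    exact TwoSidedIdeal.add_mem _ hf hg

lemma part1mem (f : FreeAlgebra K (Fin 3)) :
    ((ι K 0 * ι K 1 - ι K 1 * ι K 0) * ι K 2) * f
      - f * ((ι K 0 * ι K 1 - ι K 1 * ι K 0) * ι K 2)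
      ∈ Tideal (FreeAlgebra K (Fin 3)) 3 := by
  set X : FreeAlgebra K (Fin 3) := ι K 0
  set Y : FreeAlgebra K (Fin 3) := ι K 1
  set Z : FreeAlgebra K (Fin 3) := ι K 2
  have key : ((X * Y - Y * X) * Z) * f - f * ((X * Y - Y * X) * Z)
      = (X * Y - Y * X) * (Z * f - f * Z)
        + ((X * Y - Y * X) * f - f * (X * Y - Y * X)) * Z := by noncomm_ring
  rw [key]
  exact TwoSidedIdeal.add_mem _ (mainT f)
    (TwoSidedIdeal.mul_mem_right _ _ _ (genT X Y f))

end RankThree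

section Exterior

open ExteriorAlgebra

variable {K : Type*} [Field K] {M : Type*} [AddCommGroup M] [Module K M]

/-- The grade involution on the exterior algebra, sending `ι m` to `-ι m`. -/
noncomputable def invol : ExteriorAlgebra K M →ₐ[K] ExteriorAlgebra K M :=
  ExteriorAlgebra.lift K ⟨-(ExteriorAlgebra.ι K), fun m => by simp [ExteriorAlgebra.ι_sq_zero]⟩

lemma invol_ι (m : M) : invol (ι K m) = -ι K m := by
  simp [invol, ExteriorAlgebra.lift_ι_apply]

lemma invol_invol (a : ExteriorAlgebra K M) : invol (invol a) = a := by
  induction a using ExteriorAlgebra.induction with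
  | algebraMap r => simp
  | ι m => simp [invol_ι]
  | mul a b ha hb => simp [map_mul, ha, hb]
  | add a b ha hb => simp [map_add, ha, hb]

lemma ι_mul_eq (m : M) (a : ExteriorAlgebra K M) : ι K m * a = invol a * ι K m := by
  induction a using ExteriorAlgebra.induction with
  | algebraMap r => simp [Algebra.commutes]
  | ι n =>
    rw [invol_ι, neg_mul]
    exact eq_neg_of_add_eq_zero_left (ExteriorAlgebra.ι_add_mul_swap m n)
  | mul a b ha hb => rw [map_mul, ← mul_assoc, ha, mul_assoc, hb, ← mul_assoc]
  | add a b ha hb => rw [map_add, mul_add, add_mul, ha, hb]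

lemma even_central {a : ExteriorAlgebra K M} (ha : invol a = a) (b : ExteriorAlgebra K M) :
    a * b = b * a := by
  induction b using ExteriorAlgebra.induction with
  | algebraMap r => simp [Algebra.commutes]
  | ι m => rw [ι_mul_eq, ha]
  | mul b c hb hc => rw [← mul_assoc, hb, mul_assoc, hc, mul_assoc]
  | add b c hb hc => rw [mul_add, add_mul, hb, hc]

/-- Commutators in the exterior algebra are central (char ≠ 2). -/
lemma comm_central (h2 : (2 : K) ≠ 0) (a b c : ExteriorAlgebra K M) :
    (a * b - b * a) * c = c * (a * b - b * a) := by
  set p := (2 : K)⁻¹ • (a + invol a) with hp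
  set q := (2 : K)⁻¹ • (a - invol a) with hq
  set r := (2 : K)⁻¹ • (b + invol b) with hr
  set s := (2 : K)⁻¹ • (b - invol b) with hs
  have hpq : a = p + q := by
    rw [hp, hq, ← smul_add]
    rw [show a + invol a + (a - invol a) = (2 : K) • a by rw [two_smul]; abel]
    rw [smul_smul, inv_mul_cancel₀ h2, one_smul]
  have hrs : b = r + s := by
    rw [hr, hs, ← smul_add]
    rw [show b + invol b + (b - invol b) = (2 : K) • b by rw [two_smul]; abel]
    rw [smul_smul, inv_mul_cancel₀ h2, one_smul]
  have hip : invol p = p := by rw [hp, map_smul, map_add, invol_invol, add_comm]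
  have hir : invol r = r := by rw [hr, map_smul, map_add, invol_invol, add_comm]
  have hiq : invol q = -q := by
    rw [hq, map_smul, map_sub, invol_invol, ← smul_neg, neg_sub]
  have his : invol s = -s := by
    rw [hs, map_smul, map_sub, invol_invol, ← smul_neg, neg_sub]
  have key : a * b - b * a = q * s - s * q := by
    rw [hpq, hrs]
    have h1 : p * r = r * p := even_central hip r
    have h2' : p * s = s * p := even_central hip s
    have h3 : q * r = r * q := (even_central hir q).symm
    rw [add_mul, mul_add, mul_add, add_mul, mul_add, mul_add, h1, h2', h3]
    abel
  have heven : invol (q * s - s * q) = q * s - s * q := by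
    rw [map_sub, map_mul, map_mul, hiq, his, neg_mul_neg, neg_mul_neg]
  rw [key]
  exact even_central heven c

end Exterior

section Nonvanishing

open ExteriorAlgebra

variable {K : Type*} [Field K]

/-- Standard basis vectors of `K⁴`. -/
noncomputable def eVec : Fin 4 → (Fin 4 → K) := fun i => Pi.single i 1

/-- A family of alternating maps which is the determinant in degree 4 and zero elsewhere. -/
noncomputable def detFam : ∀ i : ℕ, (Fin 4 → K) [⋀^Fin i]→ₗ[K] K := fun i =>
  match i with
  | 4 => Matrix.detRowAlternating
  | _ => 0

noncomputable def Dmap : ExteriorAlgebra K (Fin 4 → K) →ₗ[K] K :=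
  ExteriorAlgebra.liftAlternating detFam

lemma eMat : (Matrix.of (eVec (K := K))).det = 1 := by
  have : Matrix.of (eVec (K := K)) = 1 := by
    ext i j
    simp [eVec, Matrix.one_apply, Pi.single_apply, eq_comm]
  rw [this, Matrix.det_one]

lemma prod_eq_ιMulti :
    ι K (eVec (K := K) 0) * (ι K (eVec 1) * (ι K (eVec 2) * ι K (eVec 3))) =
      ιMulti K 4 (eVec (K := K)) := by
  rw [ιMulti_apply]
  have h23 : (Fin.succ 2 : Fin 4) = 3 := rfl
  simp [List.ofFn_succ, h23]

lemma Dmap_prod :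
    Dmap (ι K (eVec (K := K) 0) * (ι K (eVec 1) * (ι K (eVec 2) * ι K (eVec 3)))) = 1 := by
  rw [prod_eq_ιMulti, Dmap, ExteriorAlgebra.liftAlternating_apply_ιMulti]
  show Matrix.detRowAlternating (eVec (K := K)) = 1
  exact eMat

lemma comm_val (h2 : (2 : K) ≠ 0) :
    (ι K (eVec (K := K) 0) * ι K (eVec 1) - ι K (eVec 1) * ι K (eVec 0)) * ι K (eVec 2)
        * ι K (eVec 3)
      - ι K (eVec 3) * ((ι K (eVec 0) * ι K (eVec 1) - ι K (eVec 1) * ι K (eVec 0))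
        * ι K (eVec 2)) ≠ 0 := by
  set a : ExteriorAlgebra K (Fin 4 → K) := ι K (eVec 0)
  set b : ExteriorAlgebra K (Fin 4 → K) := ι K (eVec 1)
  set c : ExteriorAlgebra K (Fin 4 → K) := ι K (eVec 2)
  set d : ExteriorAlgebra K (Fin 4 → K) := ι K (eVec 3)
  have hba : b * a = -(a * b) := eq_neg_of_add_eq_zero_left (ι_add_mul_swap _ _)
  have hda : d * a = -(a * d) := eq_neg_of_add_eq_zero_left (ι_add_mul_swap _ _)
  have hdb : d * b = -(b * d) := eq_neg_of_add_eq_zero_left (ι_add_mul_swap _ _)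
  have hdc : d * c = -(c * d) := eq_neg_of_add_eq_zero_left (ι_add_mul_swap _ _)
  have hdbc : d * (b * c) = b * (c * d) := by
    rw [← mul_assoc, hdb, neg_mul, mul_assoc, hdc, mul_neg, neg_neg]
  have L1 : a * b - b * a = (2 : K) • (a * b) := by
    rw [hba, sub_neg_eq_add, two_smul]
  have L2 : d * (a * (b * c)) = -(a * (b * (c * d))) := by
    rw [← mul_assoc, hda, neg_mul, mul_assoc, hdbc]
  have key : (a * b - b * a) * c * d - d * ((a * b - b * a) * c)
      = (4 : K) • (a * (b * (c * d))) := by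
    rw [L1]
    simp only [smul_mul_assoc, mul_smul_comm, mul_assoc]
    rw [L2, smul_neg, sub_neg_eq_add, ← add_smul]
    norm_num
  rw [key]
  intro hzero
  have hD := congrArg Dmap hzero
  rw [map_smul, map_zero] at hD
  rw [Dmap_prod] at hD
  have h4 : (4 : K) ≠ 0 := by
    intro h; apply h2
    have h22 : (4 : K) = 2 * 2 := by norm_num
    rw [h22] at h
    rcases mul_eq_zero.1 h with h' | h' <;> exact h'
  simp at hD
  exact h4 hD

/-- The evaluation homomorphism from the free algebra to the exterior algebra of `K⁴`. -/
noncomputable def vv : ℕ → (Fin 4 → K) := fun n =>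
  match n with
  | 0 => eVec 0
  | 1 => eVec 1
  | 2 => eVec 2
  | 3 => eVec 3
  | _ => 0

noncomputable def φmap : FreeAlgebra K ℕ →ₐ[K] ExteriorAlgebra K (Fin 4 → K) :=
  FreeAlgebra.lift K fun n => ι K (vv n)

lemma φmap_vanishes (h2 : (2 : K) ≠ 0) {w : FreeAlgebra K ℕ}
    (hw : w ∈ Tideal (FreeAlgebra K ℕ) 3) : φmap w = 0 := by
  have hsub : { x : FreeAlgebra K ℕ |
      ∃ (a : FreeAlgebra K ℕ) (l : List (FreeAlgebra K ℕ)), l.length + 1 = 3 ∧ rnComm a l = x }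
      ⊆ (TwoSidedIdeal.ker (φmap (K := K)) : Set (FreeAlgebra K ℕ)) := by
    rintro x ⟨a, l, hlen, rfl⟩
    match l, hlen with
    | [b, c], _ =>
      rw [SetLike.mem_coe, TwoSidedIdeal.mem_ker]
      show φmap ((a * b - b * a) * c - c * (a * b - b * a)) = 0
      rw [map_sub, map_mul, map_mul, map_sub, map_mul, map_mul]
      rw [sub_eq_zero]
      exact comm_central h2 _ _ _
  have := TwoSidedIdeal.mem_span_iff.mp hw (TwoSidedIdeal.ker (φmap (K := K))) hsub
  exact (TwoSidedIdeal.mem_ker _).mp this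

end Nonvanishing

/-- Over an infinite field of characteristic `≠ 2, 3`, in `F₃⁽³⁾ = F₃ / T⁽³⁾` the image of
`[x, y]·z` is central, but in `F⁽³⁾ = F / T⁽³⁾` (free algebra on countably many generators)
the image of `[x₀, x₁]·x₂` is not central. -/
theorem comm_mul_gen_central_rank_three_not_central_infinite_rank
    (K : Type*) [Field K] [Infinite K] (h2 : (2 : K) ≠ 0) (h3 : (3 : K) ≠ 0)
    (B₃ : Type*) [Ring B₃] [Algebra K B₃]
    (π₃ : FreeAlgebra K (Fin 3) →ₐ[K] B₃) (hsurj₃ : Function.Surjective π₃)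
    (hker₃ : ∀ f : FreeAlgebra K (Fin 3), π₃ f = 0 ↔ f ∈ Tideal (FreeAlgebra K (Fin 3)) 3)
    (C : Type*) [Ring C] [Algebra K C]
    (π : FreeAlgebra K ℕ →ₐ[K] C) (hsurj : Function.Surjective π)
    (hker : ∀ f : FreeAlgebra K ℕ, π f = 0 ↔ f ∈ Tideal (FreeAlgebra K ℕ) 3)
    (x y z : FreeAlgebra K (Fin 3))
    (hx : x = FreeAlgebra.ι K 0) (hy : y = FreeAlgebra.ι K 1) (hz : z = FreeAlgebra.ι K 2)
    (x₀ x₁ x₂ : FreeAlgebra K ℕ)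
    (hx₀ : x₀ = FreeAlgebra.ι K 0) (hx₁ : x₁ = FreeAlgebra.ι K 1)
    (hx₂ : x₂ = FreeAlgebra.ι K 2) :
    (∀ c : B₃, π₃ ((x * y - y * x) * z) * c = c * π₃ ((x * y - y * x) * z)) ∧
    ¬ (∀ c : C, π ((x₀ * x₁ - x₁ * x₀) * x₂) * c = c * π ((x₀ * x₁ - x₁ * x₀) * x₂)) := by
  subst hx hy hz hx₀ hx₁ hx₂
  constructor
  · intro c
    obtain ⟨f, rfl⟩ := hsurj₃ c
    have hmem := part1mem (K := K) f
    have hzero := (hker₃ _).mpr hmem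
    rw [map_sub, sub_eq_zero] at hzero
    simp only [map_mul] at hzero ⊢
    exact hzero
  · intro h
    have hcomm := h (π (FreeAlgebra.ι K 3))
    set w : FreeAlgebra K ℕ :=
      (FreeAlgebra.ι K 0 * FreeAlgebra.ι K 1 - FreeAlgebra.ι K 1 * FreeAlgebra.ι K 0)
        * FreeAlgebra.ι K 2 with hw
    have hzero : π (w * FreeAlgebra.ι K 3 - FreeAlgebra.ι K 3 * w) = 0 := by
      rw [map_sub, sub_eq_zero]
      simp only [map_mul] at hcomm ⊢
      exact hcomm
    have hmem := (hker _).mp hzero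
    have hφ := φmap_vanishes h2 hmem
    rw [hw] at hφ
    simp only [map_sub, map_mul, φmap, FreeAlgebra.lift_ι_apply] at hφ
    have h0 : vv (K := K) 0 = eVec 0 := rfl
    have h1 : vv (K := K) 1 = eVec 1 := rfl
    have h2' : vv (K := K) 2 = eVec 2 := rfl
    have h3' : vv (K := K) 3 = eVec 3 := rfl
    rw [h0, h1, h2', h3'] at hφ
    exact comm_val h2 hφ
end

section
/- Let K be an infinite field of characteristic p ≥ 5, and let A = F₂^{(3)} = F₂ / T^{(3)}(F₂) be the relatively free algebra of rank 2 with generators x, y, which satisfies [a, b, c] = 0 for all a, b, c ∈ A. For positive integers q₁, q₂ set f(q₁, q₂) = [x, y]·x^{q₁-1}·y^{q₂-1} ∈ A. If q₁ is coprime to p, then f(q₁, q₂) belongs to the K-linear span of the set of all commutators { [a, b] : a, b ∈ A } (i.e. f(q₁, q₂) is a T-consequence of the commutator [x, y]). -/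
/-- **Lemma 4.1 a).** Let `K` be an infinite field of characteristic `p ≥ 5` and let `B` be
the relatively free algebra `F₂⁽³⁾ = F₂ / T⁽³⁾(F₂)` with generators `x, y` (realized via a
surjective algebra homomorphism `π` with kernel `T⁽³⁾`). If `q₁` is coprime to `p`, then
`f(q₁, q₂) = [x, y]·x^(q₁-1)·y^(q₂-1)` lies in the `K`-linear span of all commutators
`[a, b]`, i.e. it is a T-consequence of the commutator `[x, y]`. -/
theorem nonSpecial_in_span_of_commutators
    (K : Type*) [Field K] [Infinite K]
    (p : ℕ) (hp : p.Prime) (hp5 : 5 ≤ p) (hchar : CharP K p)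
    (B : Type*) [Ring B] [Algebra K B]
    (π : FreeAlgebra K (Fin 2) →ₐ[K] B) (hsurj : Function.Surjective π)
    (hker : ∀ f : FreeAlgebra K (Fin 2), π f = 0 ↔ f ∈ Tideal (FreeAlgebra K (Fin 2)) 3)
    (x y : B) (hx : x = π (FreeAlgebra.ι K 0)) (hy : y = π (FreeAlgebra.ι K 1))
    (q₁ q₂ : ℕ) (hq₁ : 1 ≤ q₁) (hq₂ : 1 ≤ q₂) (hcop : Nat.Coprime q₁ p) :
    (x * y - y * x) * x ^ (q₁ - 1) * y ^ (q₂ - 1) ∈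
      Submodule.span K { c : B | ∃ a b : B, a * b - b * a = c } := by
  -- Every triple commutator in `B` vanishes, so commutators are central.
  have hcentral : ∀ a b z : B, (a * b - b * a) * z = z * (a * b - b * a) := by
    intro a b z
    obtain ⟨f, rfl⟩ := hsurj a
    obtain ⟨g, rfl⟩ := hsurj b
    obtain ⟨h, rfl⟩ := hsurj z
    have hmem : ((f * g - g * f) * h - h * (f * g - g * f)) ∈
        Tideal (FreeAlgebra K (Fin 2)) 3 :=
      TwoSidedIdeal.subset_span ⟨f, [g, h], rfl, rfl⟩
    have h0 := (hker _).2 hmem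
    have h1 : π ((f * g - g * f) * h - h * (f * g - g * f)) =
        (π f * π g - π g * π f) * π h - π h * (π f * π g - π g * π f) := by
      simp [mul_sub, sub_mul]
    rw [h1] at h0
    exact sub_eq_zero.mp h0
  set c : B := x * y - y * x with hc
  have hcx : c * x = x * c := hcentral x y x
  have key : ∀ n : ℕ, x ^ (n + 1) * y - y * x ^ (n + 1) = (n + 1) • (c * x ^ n) := by
    intro n
    induction n with
    | zero => simp [hc]
    | succ n ih =>
      have h1 : x ^ (n + 1) * y = (n + 1) • (c * x ^ n) + y * x ^ (n + 1) :=
        eq_add_of_sub_eq ih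
      calc x ^ (n + 1 + 1) * y - y * x ^ (n + 1 + 1)
          = x * (x ^ (n + 1) * y) - y * (x * x ^ (n + 1)) := by
            rw [pow_succ' x (n + 1), mul_assoc]
        _ = x * ((n + 1) • (c * x ^ n) + y * x ^ (n + 1)) - y * (x * x ^ (n + 1)) := by
            rw [h1]
        _ = (n + 1) • (x * (c * x ^ n)) + (x * y - y * x) * x ^ (n + 1) := by
            rw [mul_add, mul_smul_comm]
            simp only [sub_mul, mul_assoc]
            abel
        _ = (n + 1) • (c * x ^ (n + 1)) + c * x ^ (n + 1) := by
            rw [← mul_assoc, ← hcx, mul_assoc, ← pow_succ', ← hc]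
        _ = (n + 1 + 1) • (c * x ^ (n + 1)) := (succ_nsmul _ _).symm
  obtain ⟨n, rfl⟩ : ∃ n, q₁ = n + 1 := ⟨q₁ - 1, (Nat.succ_pred_eq_of_pos hq₁).symm⟩
  obtain ⟨k, rfl⟩ : ∃ k, q₂ = k + 1 := ⟨q₂ - 1, (Nat.succ_pred_eq_of_pos hq₂).symm⟩
  simp only [Nat.add_sub_cancel]
  -- The single commutator `[x^{n+1} y^k, y]`.
  have hyy : y ^ k * y = y * y ^ k := by rw [← pow_succ, ← pow_succ']
  have hC : (x ^ (n + 1) * y ^ k) * y - y * (x ^ (n + 1) * y ^ k)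
      = (n + 1) • (c * x ^ n * y ^ k) := by
    calc (x ^ (n + 1) * y ^ k) * y - y * (x ^ (n + 1) * y ^ k)
        = x ^ (n + 1) * (y * y ^ k) - y * (x ^ (n + 1) * y ^ k) := by
          rw [mul_assoc, hyy]
      _ = (x ^ (n + 1) * y - y * x ^ (n + 1)) * y ^ k := by
          simp only [sub_mul, mul_assoc]
      _ = ((n + 1) • (c * x ^ n)) * y ^ k := by rw [key n]
      _ = (n + 1) • (c * x ^ n * y ^ k) := smul_mul_assoc _ _ _
  have hne : ((n + 1 : ℕ) : K) ≠ 0 := by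
    intro h
    have hd : p ∣ (n + 1) := (CharP.cast_eq_zero_iff K p (n + 1)).mp h
    have := Nat.Coprime.eq_one_of_dvd hcop.symm hd
    omega
  have hmemC : (x ^ (n + 1) * y ^ k) * y - y * (x ^ (n + 1) * y ^ k) ∈
      Submodule.span K { c : B | ∃ a b : B, a * b - b * a = c } :=
    Submodule.subset_span ⟨x ^ (n + 1) * y ^ k, y, rfl⟩
  have heq : c * x ^ n * y ^ k = (((n + 1 : ℕ) : K))⁻¹ •
      ((x ^ (n + 1) * y ^ k) * y - y * (x ^ (n + 1) * y ^ k)) := by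
    rw [hC, ← Nat.cast_smul_eq_nsmul K, ← smul_assoc, smul_eq_mul,
      inv_mul_cancel₀ hne, one_smul]
  rw [show (x * y - y * x) * x ^ n * y ^ k = c * x ^ n * y ^ k from rfl, heq]
  exact Submodule.smul_mem _ _ hmemC
end

section
/- Let K be an infinite field of characteristic p ≥ 5, and let A = F₂^{(3)} = F₂ / T^{(3)}(F₂) be the relatively free algebra of rank 2 with generators x, y. For positive integers q₁, q₂ set f(q₁, q₂) = [x, y]·x^{q₁-1}·y^{q₂-1} ∈ A. If s₁ ≥ 1 and t₁ is a positive integer coprime to p, then f(p^{s₁}·t₁, q₂) belongs to the K-linear span of the set { [a, b]·a^{p^{s₁}-1}·b^{q₂-1} : a, b ∈ A } (i.e. it is a T-consequence of f(p^{s₁}, q₂)). -/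
/-- In a ring where all commutators are central, `x^(n+1) y - y x^(n+1) = (n+1)•((xy-yx)x^n)`. -/
lemma comm_pow_aux {B : Type*} [Ring B]
    (central : ∀ u v w : B, (u * v - v * u) * w = w * (u * v - v * u))
    (x y : B) : ∀ n : ℕ,
    x ^ (n + 1) * y - y * x ^ (n + 1) = (n + 1) • ((x * y - y * x) * x ^ n) := by
  intro n
  induction n with
  | zero => simp
  | succ n ih =>
    have key : x ^ (n + 2) * y - y * x ^ (n + 2)
        = (x ^ (n + 1) * y - y * x ^ (n + 1)) * x + x ^ (n + 1) * (x * y - y * x) := by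
      rw [pow_succ x (n+1), pow_succ x n]
      noncomm_ring
    rw [key, ih, ← central x y (x ^ (n+1))]
    have : (x * y - y * x) * x ^ n * x = (x * y - y * x) * x ^ (n + 1) := by
      rw [mul_assoc, ← pow_succ]
    rw [smul_mul_assoc, this, succ_nsmul ((x * y - y * x) * x ^ (n+1)) (n+1)]

/-- **Lemma 4.1 б).** Let `K` be an infinite field of characteristic `p ≥ 5` and let `B` be
the relatively free algebra `F₂⁽³⁾ = F₂ / T⁽³⁾(F₂)` with generators `x, y`. If `s₁ ≥ 1` and
`t₁` is a positive integer coprime to `p`, then `f(p^{s₁}·t₁, q₂)` lies in the `K`-linear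
span of the set `{ [a, b]·a^(p^{s₁}-1)·b^(q₂-1) : a, b ∈ B }`, i.e. it is a T-consequence
of `f(p^{s₁}, q₂)`. -/
theorem f_pst_in_span_of_f_ps
    (K : Type*) [Field K] [Infinite K]
    (p : ℕ) (hp : p.Prime) (hp5 : 5 ≤ p) (hchar : CharP K p)
    (B : Type*) [Ring B] [Algebra K B]
    (π : FreeAlgebra K (Fin 2) →ₐ[K] B) (hsurj : Function.Surjective π)
    (hker : ∀ f : FreeAlgebra K (Fin 2), π f = 0 ↔ f ∈ Tideal (FreeAlgebra K (Fin 2)) 3)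
    (x y : B) (hx : x = π (FreeAlgebra.ι K 0)) (hy : y = π (FreeAlgebra.ι K 1))
    (s₁ t₁ q₂ : ℕ) (hs₁ : 1 ≤ s₁) (ht₁ : 1 ≤ t₁) (hq₂ : 1 ≤ q₂)
    (hcop : Nat.Coprime t₁ p) :
    (x * y - y * x) * x ^ (p ^ s₁ * t₁ - 1) * y ^ (q₂ - 1) ∈
      Submodule.span K
        { c : B | ∃ a b : B, (a * b - b * a) * a ^ (p ^ s₁ - 1) * b ^ (q₂ - 1) = c } := by
  -- commutators in B are central
  have central : ∀ u v w : B, (u * v - v * u) * w = w * (u * v - v * u) := by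
    intro u v w
    obtain ⟨a, rfl⟩ := hsurj u
    obtain ⟨b, rfl⟩ := hsurj v
    obtain ⟨c, rfl⟩ := hsurj w
    have hmem : ((a * b - b * a) * c - c * (a * b - b * a))
        ∈ Tideal (FreeAlgebra K (Fin 2)) 3 := by
      apply TwoSidedIdeal.subset_span
      exact ⟨a, [b, c], rfl, rfl⟩
    have := (hker _).mpr hmem
    have h0 : π ((a * b - b * a) * c) - π (c * (a * b - b * a)) = 0 := by
      rw [← map_sub]; exact this
    have := sub_eq_zero.mp h0
    simpa [map_mul, map_sub] using this
  set m := p ^ s₁ with hm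
  have hm1 : 1 ≤ m := Nat.one_le_pow _ _ hp.pos
  set c : B := x * y - y * x with hc
  -- exponent arithmetic
  have hexp : (t₁ - 1) + t₁ * (m - 1) = p ^ s₁ * t₁ - 1 := by
    obtain ⟨t, rfl⟩ := Nat.exists_eq_add_of_le ht₁
    obtain ⟨m', hm'⟩ := Nat.exists_eq_add_of_le hm1
    rw [← hm, hm']
    have h : (1 + m') * (1 + t) = 1 + (t + (1 + t) * m') := by ring
    simp only [Nat.add_sub_cancel_left]
    omega
  -- the generating element with a = x^t₁, b = y
  have hgen : (x ^ t₁ * y - y * x ^ t₁) * (x ^ t₁) ^ (m - 1) * y ^ (q₂ - 1)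
      = t₁ • (c * x ^ (p ^ s₁ * t₁ - 1) * y ^ (q₂ - 1)) := by
    have h1 : x ^ t₁ * y - y * x ^ t₁ = t₁ • (c * x ^ (t₁ - 1)) := by
      have := comm_pow_aux central x y (t₁ - 1)
      rw [Nat.sub_add_cancel ht₁] at this
      rw [this, hc]
    rw [h1, ← pow_mul, smul_mul_assoc, smul_mul_assoc, mul_assoc c, ← pow_add, hexp]
  have hset : (x ^ t₁ * y - y * x ^ t₁) * (x ^ t₁) ^ (m - 1) * y ^ (q₂ - 1) ∈
      {c : B | ∃ a b : B, (a * b - b * a) * a ^ (p ^ s₁ - 1) * b ^ (q₂ - 1) = c} :=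
    ⟨x ^ t₁, y, rfl⟩
  have hmem := Submodule.subset_span (R := K) hset
  rw [hgen] at hmem
  have ht0 : (t₁ : K) ≠ 0 := by
    intro h
    have hd : p ∣ t₁ := (CharP.cast_eq_zero_iff K p t₁).mp h
    have : p ∣ Nat.gcd t₁ p := Nat.dvd_gcd hd dvd_rfl
    rw [hcop] at this
    exact Nat.Prime.one_lt hp |>.ne' (Nat.le_antisymm (Nat.le_of_dvd one_pos this) hp.one_lt.le ▸ rfl)
  have hsmul : (t₁ : ℕ) • (c * x ^ (p ^ s₁ * t₁ - 1) * y ^ (q₂ - 1))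
      = (t₁ : K) • (c * x ^ (p ^ s₁ * t₁ - 1) * y ^ (q₂ - 1)) := by
    rw [← Nat.cast_smul_eq_nsmul K]
  rw [hsmul] at hmem
  have := Submodule.smul_mem _ ((t₁ : K)⁻¹) hmem
  rw [smul_smul, inv_mul_cancel₀ ht0, one_smul] at this
  exact this
end

section
/- Let K be an infinite field of characteristic p ≥ 5, and let A = F₂^{(3)} = F₂ / T^{(3)}(F₂) be the relatively free algebra of rank 2 with generators x, y. Let U be a nonzero T-space of A contained in the commutator ideal T^{(2)}(A). Then U is the T-space generated by the commutator [x, y] together with the special elements f(q₁, q₂) = [x, y]·x^{q₁-1}·y^{q₂-1} (with q₁, q₂ positive powers of p) that belong to U. -/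
/-- A `T`-space of a `K`-algebra `B`: a `K`-linear subspace invariant under every unital
`K`-algebra endomorphism of `B`. -/
def IsTSpace (K : Type*) {B : Type*} [CommSemiring K] [Semiring B] [Algebra K B]
    (U : Submodule K B) : Prop :=
  ∀ φ : B →ₐ[K] B, ∀ u ∈ U, φ u ∈ U

/-- The `T`-space generated by a set `S ⊆ B`: the smallest `T`-space containing `S`. -/
def TSpaceGen (K : Type*) {B : Type*} [CommSemiring K] [Semiring B] [Algebra K B]
    (S : Set B) : Submodule K B :=
  sInf { W : Submodule K B | IsTSpace K W ∧ S ⊆ W }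

lemma aux_map_rnComm {R S : Type*} [Ring R] [Ring S] (φ : R →+* S) (a : R) (l : List R) :
    φ (rnComm a l) = rnComm (φ a) (l.map φ) := by
  induction l generalizing a with
  | nil => rfl
  | cons b l ih =>
    simp only [rnComm, List.map_cons]
    rw [ih, map_sub, map_mul, map_mul]

lemma aux_exists_endo {K : Type*} [CommRing K] {B : Type*} [Ring B] [Algebra K B]
    (π : FreeAlgebra K (Fin 2) →ₐ[K] B) (hsurj : Function.Surjective π)
    (hker3 : ∀ f, π f = 0 → f ∈ Tideal (FreeAlgebra K (Fin 2)) 3)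
    (hcomm3 : ∀ a b d : B, (a*b - b*a)*d - d*(a*b - b*a) = 0)
    (u v : B) :
    ∃ φ : B →ₐ[K] B, φ (π (FreeAlgebra.ι K 0)) = u ∧ φ (π (FreeAlgebra.ι K 1)) = v := by
  classical
  set ψ : FreeAlgebra K (Fin 2) →ₐ[K] B := FreeAlgebra.lift K ![u, v] with hψ
  have hψ0 : ∀ f, π f = 0 → ψ f = 0 := by
    intro f hf
    have hmem := hker3 f hf
    have hsub : { x | ∃ (a : FreeAlgebra K (Fin 2)) (l : List (FreeAlgebra K (Fin 2))),
        l.length + 1 = 3 ∧ rnComm a l = x } ⊆ (TwoSidedIdeal.ker ψ : Set (FreeAlgebra K (Fin 2))) := by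
      rintro _ ⟨a, l, hl, rfl⟩
      obtain ⟨b, d, rfl⟩ := List.length_eq_two.mp (by omega : l.length = 2)
      rw [SetLike.mem_coe, TwoSidedIdeal.mem_ker]
      have : ψ (rnComm a [b, d]) = rnComm (ψ a) [ψ b, ψ d] := by
        simpa using aux_map_rnComm (ψ : FreeAlgebra K (Fin 2) →+* B) a [b, d]
      rw [this]
      simpa [rnComm] using hcomm3 (ψ a) (ψ b) (ψ d)
    exact (TwoSidedIdeal.mem_ker _).mp (TwoSidedIdeal.mem_span_iff.mp hmem _ hsub)
  have hψeq : ∀ f g, π f = π g → ψ f = ψ g := by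
    intro f g h
    have : ψ (f - g) = 0 := hψ0 _ (by rw [map_sub, h, sub_self])
    rw [map_sub, sub_eq_zero] at this
    exact this
  set σ : B → FreeAlgebra K (Fin 2) := Function.surjInv hsurj with hσ
  have hπσ : ∀ b, π (σ b) = b := fun b => Function.surjInv_eq hsurj b
  have f_one : ψ (σ 1) = 1 := by rw [hψeq (σ 1) 1 (by rw [hπσ, map_one]), map_one]
  have f_mul : ∀ a b : B, ψ (σ (a*b)) = ψ (σ a) * ψ (σ b) := fun a b => by
    rw [hψeq (σ (a*b)) (σ a * σ b) (by rw [hπσ, map_mul, hπσ, hπσ]), map_mul]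
  have f_zero : ψ (σ 0) = 0 := by rw [hψeq (σ 0) 0 (by rw [hπσ, map_zero]), map_zero]
  have f_add : ∀ a b : B, ψ (σ (a+b)) = ψ (σ a) + ψ (σ b) := fun a b => by
    rw [hψeq (σ (a+b)) (σ a + σ b) (by rw [hπσ, map_add, hπσ, hπσ]), map_add]
  have f_comm : ∀ r : K, ψ (σ (algebraMap K B r)) = algebraMap K B r := fun r => by
    rw [hψeq (σ (algebraMap K B r)) (algebraMap K (FreeAlgebra K (Fin 2)) r)
      (by rw [hπσ, AlgHom.commutes]), AlgHom.commutes]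
  refine ⟨{ toFun := fun b => ψ (σ b)
            map_one' := f_one
            map_mul' := f_mul
            map_zero' := f_zero
            map_add' := f_add
            commutes' := f_comm }, ?_, ?_⟩
  · show ψ (σ (π (FreeAlgebra.ι K 0))) = u
    rw [hψeq _ (FreeAlgebra.ι K 0) (by rw [hπσ]), hψ, FreeAlgebra.lift_ι_apply]
    simp
  · show ψ (σ (π (FreeAlgebra.ι K 1))) = v
    rw [hψeq _ (FreeAlgebra.ι K 1) (by rw [hπσ]), hψ, FreeAlgebra.lift_ι_apply]
    simp


section Ext
variable {K : Type*} [Field K] [Infinite K] {B : Type*} [AddCommGroup B] [Module K B]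

lemma ext0 (W : Submodule K B) (N : ℕ) (v : Fin N → B)
    (h : ∀ α : K, (∑ i : Fin N, α^(i:ℕ) • v i) ∈ W) : ∀ i, v i ∈ W := by
  intro i
  set a : Fin N → K := fun i => (Infinite.natEmbedding K) i with ha
  have hainj : Function.Injective a :=
    fun i j hij => Fin.val_injective ((Infinite.natEmbedding K).injective hij)
  set M : Matrix (Fin N) (Fin N) K := Matrix.vandermonde a with hM
  have hdet : M.det ≠ 0 := by
    rw [hM, Matrix.det_vandermonde]
    apply Finset.prod_ne_zero_iff.2
    intro j _
    apply Finset.prod_ne_zero_iff.2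
    intro k hk
    have hjk : j ≠ k := ne_of_lt (Finset.mem_Ioi.1 hk)
    exact sub_ne_zero.2 fun hc => hjk (hainj hc).symm
  have hinv : M⁻¹ * M = 1 := Matrix.nonsing_inv_mul M (isUnit_iff_ne_zero.2 hdet)
  have key : v i = ∑ j : Fin N, (M⁻¹ i j) • (∑ k : Fin N, (a j)^(k:ℕ) • v k) := by
    have step : ∀ j : Fin N, (M⁻¹ i j) • (∑ k : Fin N, (a j)^(k:ℕ) • v k)
        = ∑ k : Fin N, (M⁻¹ i j * M j k) • v k := by
      intro j
      rw [Finset.smul_sum]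
      refine Finset.sum_congr rfl fun k _ => ?_
      rw [smul_smul, hM, Matrix.vandermonde_apply]
    rw [Finset.sum_congr rfl (fun j _ => step j), Finset.sum_comm]
    have : ∀ k : Fin N, ∑ j : Fin N, (M⁻¹ i j * M j k) • v k
        = ((M⁻¹ * M) i k) • v k := by
      intro k
      rw [Matrix.mul_apply, Finset.sum_smul]
    rw [Finset.sum_congr rfl (fun k _ => this k), hinv]
    simp [Matrix.one_apply]
  rw [key]
  exact Submodule.sum_mem W fun j _ => Submodule.smul_mem W _ (h (a j))

lemma ext1 (W : Submodule K B) (T : Finset ℕ) (v : ℕ → B)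
    (h : ∀ α : K, (∑ i ∈ T, α^i • v i) ∈ W) : ∀ i ∈ T, v i ∈ W := by
  intro i hi
  set N : ℕ := T.sup id + 1 with hN
  have hsub : T ⊆ Finset.range N := fun j hj =>
    Finset.mem_range.2 (Nat.lt_succ_of_le (Finset.le_sup (f := id) hj))
  set w : ℕ → B := fun j => if j ∈ T then v j else 0 with hw
  set v' : Fin N → B := fun j => w (j : ℕ) with hv'
  have h' : ∀ α : K, (∑ j : Fin N, α^(j:ℕ) • v' j) ∈ W := by
    intro α
    have e1 : (∑ j : Fin N, α^(j:ℕ) • v' j) = ∑ j ∈ Finset.range N, α^j • w j :=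
      Fin.sum_univ_eq_sum_range (fun j => α^j • w j) N
    have e2 : ∑ i ∈ T, α^i • w i = ∑ j ∈ Finset.range N, α^j • w j := by
      refine Finset.sum_subset hsub fun j _ hj => ?_
      simp [hw, hj]
    have e3 : ∑ i ∈ T, α^i • w i = ∑ i ∈ T, α^i • v i := by
      refine Finset.sum_congr rfl fun i hi => by simp [hw, hi]
    rw [e1, ← e2, e3]; exact h α
  have := ext0 W N v' h' ⟨i, Finset.mem_range.1 (hsub hi)⟩
  simpa [hv', hw, hi] using this

end Ext

section Ext2
variable {K : Type*} [Field K] [Infinite K] {B : Type*} [AddCommGroup B] [Module K B]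

lemma ext2 (W : Submodule K B) (T : Finset (ℕ×ℕ)) (v : ℕ×ℕ → B) (e₁ e₂ : ℕ×ℕ → ℕ)
    (inj : ∀ t ∈ T, ∀ t' ∈ T, e₁ t = e₁ t' → e₂ t = e₂ t' → t = t')
    (h : ∀ α β : K, (∑ t ∈ T, (α^(e₁ t) * β^(e₂ t)) • v t) ∈ W) :
    ∀ t ∈ T, v t ∈ W := by
  classical
  intro t₀ ht₀
  have step1 : ∀ β : K, ∀ m ∈ T.image e₁,
      (∑ t ∈ T.filter (fun t => e₁ t = m), β^(e₂ t) • v t) ∈ W := by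
    intro β
    apply ext1 W (T.image e₁) (fun m => ∑ t ∈ T.filter (fun t => e₁ t = m), β^(e₂ t) • v t)
    intro α
    have key : (∑ m ∈ T.image e₁, α^m • ∑ t ∈ T.filter (fun t => e₁ t = m), β^(e₂ t) • v t)
        = ∑ t ∈ T, (α^(e₁ t) * β^(e₂ t)) • v t := by
      rw [← Finset.sum_fiberwise_of_maps_to (fun t ht => Finset.mem_image_of_mem e₁ ht)
        (fun t => (α^(e₁ t) * β^(e₂ t)) • v t)]
      refine Finset.sum_congr rfl fun m _ => ?_
      rw [Finset.smul_sum]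
      refine Finset.sum_congr rfl fun t ht => ?_
      have : e₁ t = m := (Finset.mem_filter.1 ht).2
      rw [this, mul_smul]
    rw [key]; exact h α β
  set T₁ := T.filter (fun t => e₁ t = e₁ t₀) with hT₁
  have step2 : ∀ n ∈ T₁.image e₂,
      (∑ t ∈ T₁.filter (fun t => e₂ t = n), v t) ∈ W := by
    apply ext1 W (T₁.image e₂) (fun n => ∑ t ∈ T₁.filter (fun t => e₂ t = n), v t)
    intro β
    have key : (∑ n ∈ T₁.image e₂, β^n • ∑ t ∈ T₁.filter (fun t => e₂ t = n), v t)
        = ∑ t ∈ T₁, β^(e₂ t) • v t := by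
      rw [← Finset.sum_fiberwise_of_maps_to (fun t ht => Finset.mem_image_of_mem e₂ ht)
        (fun t => β^(e₂ t) • v t)]
      refine Finset.sum_congr rfl fun n _ => ?_
      rw [Finset.smul_sum]
      refine Finset.sum_congr rfl fun t ht => ?_
      rw [(Finset.mem_filter.1 ht).2]
    rw [key]
    exact step1 β (e₁ t₀) (Finset.mem_image_of_mem e₁ ht₀)
  have ht₀1 : t₀ ∈ T₁ := Finset.mem_filter.2 ⟨ht₀, rfl⟩
  have := step2 (e₂ t₀) (Finset.mem_image_of_mem e₂ ht₀1)
  have hsingle : T₁.filter (fun t => e₂ t = e₂ t₀) = {t₀} := by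
    ext t
    simp only [Finset.mem_filter, Finset.mem_singleton, hT₁]
    constructor
    · rintro ⟨⟨ht, he₁⟩, he₂⟩
      exact inj t ht t₀ ht₀ he₁ he₂
    · rintro rfl
      exact ⟨⟨ht₀, rfl⟩, rfl⟩
  rwa [hsingle, Finset.sum_singleton] at this

end Ext2

open Polynomial Finset in
lemma choose_zmod_eq_one (p : ℕ) (hp : p.Prime) (hodd : p ≠ 2) (s m₁ : ℕ) (hm₁ : 1 ≤ m₁) :
    ((Nat.choose (p^s * m₁ - 1) (p^s - 1) : ℕ) : ZMod p) = 1 := by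
  haveI : Fact p.Prime := ⟨hp⟩
  set q := p^s with hq
  have hq1 : 1 ≤ q := Nat.one_le_pow _ _ hp.pos
  have hqodd : Odd q := (hp.odd_of_ne_two hodd).pow
  set m := q * m₁ - 1 with hm
  have E1 : ((X+1 : (ZMod p)[X]))^m * (X+1) = (X^q+1)^m₁ := by
    rw [← pow_succ]
    have h1 : m + 1 = q * m₁ := by
      have : 1 ≤ q * m₁ := Nat.one_le_iff_ne_zero.2 (by positivity)
      omega
    rw [h1, hq, pow_mul, add_pow_char_pow]
    simp
  set g : (ZMod p)[X] := ∑ k ∈ Finset.range q, (-X)^k with hg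
  have E2 : (X+1 : (ZMod p)[X]) * g = 1 + X^q := by
    have h3 := geom_sum_mul (-X : (ZMod p)[X]) q
    have h2 : (-X : (ZMod p)[X])^q = -(X^q) := hqodd.neg_pow X
    rw [h2] at h3
    have : (X + 1 : (ZMod p)[X]) * g = -(g * (-X - 1)) := by ring
    rw [this, h3]; ring
  have E3 : ((X+1 : (ZMod p)[X]))^m * (1 + X^q) = (X^q+1)^m₁ * g := by
    rw [← E2, ← mul_assoc, E1]
  obtain ⟨h, hh⟩ : (X^q : (ZMod p)[X]) ∣ (X^q+1)^m₁ - 1 := by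
    have := sub_dvd_pow_sub_pow (X^q+1 : (ZMod p)[X]) 1 m₁
    simpa using this
  have E4 : ((X^q+1 : (ZMod p)[X]))^m₁ = 1 + X^q * h := by
    rw [← hh]; ring
  have key := congrArg (fun f : (ZMod p)[X] => f.coeff (q-1)) E3
  simp only [E4] at key
  have hlt : q - 1 < q := by omega
  have L : (((X+1 : (ZMod p)[X]))^m * (1 + X^q)).coeff (q-1)
      = (Nat.choose m (q-1) : ZMod p) := by
    rw [mul_add, mul_one, coeff_add, coeff_X_add_one_pow, coeff_mul_X_pow', if_neg (by omega)]
    ring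
  have R : (((1 : (ZMod p)[X]) + X^q * h) * g).coeff (q-1) = 1 := by
    have : ((1 : (ZMod p)[X]) + X^q * h) * g = g + X^q * (h * g) := by ring
    rw [this, coeff_add, coeff_X_pow_mul', if_neg (by omega), hg, finset_sum_coeff]
    have : ∀ k ∈ Finset.range q, ((-X : (ZMod p)[X])^k).coeff (q-1)
        = if k = q - 1 then ((-1 : ZMod p))^k else 0 := by
      intro k _
      rw [neg_pow, ← C_1, ← C_neg, ← C_pow, coeff_C_mul, coeff_X_pow]
      by_cases hk : k = q -1 <;> simp [hk]
      omega
    rw [Finset.sum_congr rfl this, Finset.sum_ite_eq' (Finset.range q) (q-1)]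
    have heven : Even (q - 1) := Nat.Odd.sub_odd hqodd odd_one
    simp [hlt, heven.neg_one_pow]
  rw [L, R] at key
  exact key

/-- **Theorem 5.** Let `K` be an infinite field of characteristic `p ≥ 5` and let `B` be the
relatively free algebra `F₂⁽³⁾ = F₂ / T⁽³⁾(F₂)` with generators `x, y`. Every nonzero
T-space `U` of `B` contained in the commutator ideal `T⁽²⁾(B)` is generated, as a T-space,
by the commutator `[x, y]` together with the special elements
`f(q₁, q₂) = [x, y]·x^(q₁-1)·y^(q₂-1)` (with `q₁, q₂` positive powers of `p`) lying in `U`. -/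
theorem tspace_in_commutator_ideal_generated_by_special
    (K : Type*) [Field K] [Infinite K]
    (p : ℕ) (hp : p.Prime) (hp5 : 5 ≤ p) (hchar : CharP K p)
    (B : Type*) [Ring B] [Algebra K B]
    (π : FreeAlgebra K (Fin 2) →ₐ[K] B) (hsurj : Function.Surjective π)
    (hker : ∀ f : FreeAlgebra K (Fin 2), π f = 0 ↔ f ∈ Tideal (FreeAlgebra K (Fin 2)) 3)
    (x y : B) (hx : x = π (FreeAlgebra.ι K 0)) (hy : y = π (FreeAlgebra.ι K 1))
    (U : Submodule K B) (hU : IsTSpace K U) (hUne : U ≠ ⊥)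
    (hUsub : ∀ u ∈ U, u ∈ Tideal B 2) :
    U = TSpaceGen K ({x * y - y * x} ∪
      { w : B | (∃ s₁ s₂ : ℕ, 1 ≤ s₁ ∧ 1 ≤ s₂ ∧
          w = (x * y - y * x) * x ^ (p ^ s₁ - 1) * y ^ (p ^ s₂ - 1)) ∧ w ∈ U }) := by
  classical
  set c : B := x * y - y * x with hc
  -- T³(B) = 0
  have t3 : ∀ a b d : B, (a*b - b*a)*d - d*(a*b - b*a) = 0 := by
    intro a b d
    obtain ⟨f, rfl⟩ := hsurj a
    obtain ⟨g, rfl⟩ := hsurj b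
    obtain ⟨k, rfl⟩ := hsurj d
    have hmem : rnComm f [g, k] ∈ Tideal (FreeAlgebra K (Fin 2)) 3 :=
      TwoSidedIdeal.subset_span ⟨f, [g, k], by simp, rfl⟩
    have h0 : π (rnComm f [g, k]) = 0 := (hker _).mpr hmem
    have h1 : π (rnComm f [g, k]) = (π f * π g - π g * π f) * π k
        - π k * (π f * π g - π g * π f) := by
      simpa [rnComm] using aux_map_rnComm (π : FreeAlgebra K (Fin 2) →+* B) f [g, k]
    rw [h0] at h1
    exact h1.symm
  have centr : ∀ a b d : B, (a*b - b*a)*d = d*(a*b - b*a) := fun a b d =>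
    sub_eq_zero.mp (t3 a b d)
  have ccomm : ∀ d : B, c*d = d*c := fun d => by rw [hc]; exact centr x y d
  have Hmove : ∀ u w : B, u*(c*w) = c*(u*w) := fun u w => by
    rw [← mul_assoc, ← ccomm u, mul_assoc]
  have csq : c*c = 0 := by
    have h3 := t3 (x*y) x y
    have hz := centr y x y
    have iden : ((x*y)*x - x*(x*y))*y - y*((x*y)*x - x*(x*y))
        - ((x*y - y*x)*(y*x - x*y))
        = x*((y*x - x*y)*y - y*(y*x - x*y)) := by noncomm_ring
    rw [h3, hz, sub_self, mul_zero, zero_sub, neg_eq_zero] at iden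
    have : c * (y*x - x*y) = 0 := by rw [hc]; exact iden
    have h4 : y*x - x*y = -c := by rw [hc]; noncomm_ring
    rw [h4, mul_neg, neg_eq_zero] at this
    exact this
  have cc0 : ∀ w : B, c*(c*w) = 0 := fun w => by rw [← mul_assoc, csq, zero_mul]
  have hyx : y*x = x*y - c := by rw [hc]; noncomm_ring
  -- commutation lemmas
  have L1 : ∀ k : ℕ, y*x^(k+1) = x^(k+1)*y - (k+1) • (c*x^k) := by
    intro k; induction k with
    | zero => simpa using hyx
    | succ k ih =>
      have e1 : y*x^(k+1+1) = (y*x^(k+1))*x := by rw [pow_succ, ← mul_assoc]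
      have e2 : (c*x^k)*x = c*x^(k+1) := by rw [mul_assoc, ← pow_succ]
      have e3 : (x^(k+1)*y)*x = x^(k+1+1)*y - c*x^(k+1) := by
        rw [mul_assoc, hyx, mul_sub, ← mul_assoc, ← pow_succ, ← ccomm]
      rw [e1, ih, sub_mul, smul_mul_assoc, e2, e3, succ_nsmul (c*x^(k+1)) (k+1), sub_sub,
        add_comm (c*x^(k+1)) ((k+1) • (c*x^(k+1)))]
  have L1n : ∀ m : ℕ, y*x^m = x^m*y - m • (c*x^(m-1)) := by
    intro m
    cases m with
    | zero => simp
    | succ k => simpa using L1 k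
  have L2 : ∀ k : ℕ, y^(k+1)*x = x*y^(k+1) - (k+1) • (c*y^k) := by
    intro k; induction k with
    | zero => simpa using hyx
    | succ k ih =>
      have e1 : y^(k+1+1)*x = y*(y^(k+1)*x) := by rw [pow_succ', mul_assoc]
      have e2 : y*(c*y^k) = c*y^(k+1) := by rw [Hmove, ← pow_succ']
      have e3 : y*(x*y^(k+1)) = x*y^(k+1+1) - c*y^(k+1) := by
        rw [← mul_assoc, hyx, sub_mul, mul_assoc, ← pow_succ']
      rw [e1, ih, mul_sub, mul_smul_comm, e2, e3, succ_nsmul (c*y^(k+1)) (k+1), sub_sub,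
        add_comm (c*y^(k+1)) ((k+1) • (c*y^(k+1)))]
  have L2n : ∀ n : ℕ, y^n*x = x*y^n - n • (c*y^(n-1)) := by
    intro n
    cases n with
    | zero => simp
    | succ k => simpa using L2 k
  have L3 : ∀ j k : ℕ, c*(y^j*x^k) = c*(x^k*y^j) := by
    intro j k; induction k with
    | zero => simp
    | succ k ih =>
      have e1 : y^j*x^(k+1) = (y^j*x^k)*x := by rw [pow_succ, ← mul_assoc]
      calc c*(y^j*x^(k+1)) = (c*(y^j*x^k))*x := by rw [e1, ← mul_assoc]
        _ = (c*(x^k*y^j))*x := by rw [ih]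
        _ = c*(x^k*(y^j*x)) := by rw [mul_assoc, mul_assoc]
        _ = c*(x^k*(x*y^j)) - j•(c*(x^k*(c*y^(j-1)))) := by
            rw [L2n, mul_sub, mul_smul_comm, mul_sub, mul_smul_comm]
        _ = c*(x^(k+1)*y^j) := by
            rw [Hmove (x^k) (y^(j-1)), cc0, smul_zero, sub_zero, ← mul_assoc (x^k) x (y^j), ← pow_succ]
  have VM : ∀ m n k l : ℕ, (c*x^m*y^n)*(x^k*y^l) = c*x^(m+k)*y^(n+l) := by
    intro m n k l
    have h1 : c*(y^n*(x^k*y^l)) = c*(x^k*(y^n*y^l)) := by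
      have h2 := congrArg (· * y^l) (L3 n k)
      simpa [mul_assoc] using h2
    calc (c*x^m*y^n)*(x^k*y^l) = x^m*(c*(y^n*(x^k*y^l))) := by
          rw [Hmove]; simp only [mul_assoc]
      _ = x^m*(c*(x^k*(y^n*y^l))) := by rw [h1]
      _ = c*x^(m+k)*y^(n+l) := by
          rw [Hmove, pow_add, pow_add]; simp only [mul_assoc]
  have P1 : ∀ m n : ℕ, x*(c*x^m*y^n) = c*x^(m+1)*y^n := by
    intro m n
    calc x*(c*x^m*y^n) = c*(x*(x^m*y^n)) := by rw [mul_assoc c, Hmove]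
      _ = c*x^(m+1)*y^n := by rw [← mul_assoc x (x^m) (y^n), ← pow_succ', ← mul_assoc]
  have P2 : ∀ m n : ℕ, y*(c*x^m*y^n) = c*x^m*y^(n+1) := by
    intro m n
    have h1 : y*(x^m*y^n) = x^m*y^(n+1) - m•((c*x^(m-1))*y^n) := by
      rw [← mul_assoc, L1n, sub_mul, smul_mul_assoc, mul_assoc, ← pow_succ']
    calc y*(c*x^m*y^n) = c*(y*(x^m*y^n)) := by rw [mul_assoc c, Hmove]
      _ = c*(x^m*y^(n+1)) - m•(c*((c*x^(m-1))*y^n)) := by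
          rw [h1, mul_sub, mul_smul_comm]
      _ = c*x^m*y^(n+1) := by
          rw [mul_assoc (c) (x^(m-1)) (y^n), cc0, smul_zero, sub_zero, ← mul_assoc]
  have P3 : ∀ m n : ℕ, (c*x^m*y^n)*x = c*x^(m+1)*y^n := by
    intro m n
    calc (c*x^m*y^n)*x = c*(x^m*(y^n*x)) := by simp only [mul_assoc]
      _ = c*(x^m*(x*y^n)) - n•(c*(x^m*(c*y^(n-1)))) := by
          rw [L2n, mul_sub, mul_smul_comm, mul_sub, mul_smul_comm]
      _ = c*x^(m+1)*y^n := by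
          rw [Hmove (x^m) (y^(n-1)), cc0, smul_zero, sub_zero,
            ← mul_assoc (x^m) x (y^n), ← pow_succ, ← mul_assoc]
  have P4 : ∀ m n : ℕ, (c*x^m*y^n)*y = c*x^m*y^(n+1) := by
    intro m n
    rw [mul_assoc, ← pow_succ]
  have CM : ∀ a b : ℕ, x^(a+1)*y^(b+1) - y^(b+1)*x^(a+1)
      = ((a+1)*(b+1)) • (c*x^a*y^b) := by
    intro a b
    induction a with
    | zero =>
      have h1 : x*y^(b+1) - y^(b+1)*x = (b+1) • (c*y^b) := by rw [L2 b]; abel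
      have h0 : c*x^0*y^b = c*y^b := by rw [pow_zero, mul_one]
      rw [pow_one, h1, h0, zero_add, one_mul]
    | succ a ih =>
      have iden : x^(a+1+1)*y^(b+1) - y^(b+1)*x^(a+1+1)
          = x*(x^(a+1)*y^(b+1) - y^(b+1)*x^(a+1)) + (x*y^(b+1) - y^(b+1)*x)*x^(a+1) := by
        rw [pow_succ' x (a+1)]; noncomm_ring
      have h1 : x*y^(b+1) - y^(b+1)*x = (b+1) • (c*y^b) := by rw [L2 b]; abel
      have h2 : (c*y^b)*x^(a+1) = c*x^(a+1)*y^b := by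
        have h3 : (c*y^b)*x^(a+1) = c*(y^b*x^(a+1)) := by rw [mul_assoc]
        rw [h3, L3, ← mul_assoc]
      rw [iden, ih, h1, mul_smul_comm, P1, smul_mul_assoc, h2, ← add_nsmul]
      congr 1
      ring
  -- the span of monomials c x^m y^n
  set Q : Submodule K B := Submodule.span K (Set.range fun t : ℕ×ℕ => c*x^t.1*y^t.2) with hQ
  have monQ : ∀ m n : ℕ, c*x^m*y^n ∈ Q := fun m n =>
    Submodule.subset_span ⟨(m, n), rfl⟩
  have Pc : ∀ q ∈ Q, x*q ∈ Q ∧ y*q ∈ Q ∧ q*x ∈ Q ∧ q*y ∈ Q := by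
    have key : ∀ (f : B →ₗ[K] B), (∀ m n : ℕ, f (c*x^m*y^n) ∈ Q) → ∀ q ∈ Q, f q ∈ Q := by
      intro f hf q hq
      have hle : Q ≤ Submodule.comap f Q := by
        rw [hQ]
        rw [Submodule.span_le]
        rintro _ ⟨t, rfl⟩
        exact hf t.1 t.2
      exact hle hq
    intro q hq
    refine ⟨key (LinearMap.mulLeft K x) (fun m n => by simpa [P1 m n] using monQ (m+1) n) q hq,
      key (LinearMap.mulLeft K y) (fun m n => by simpa [P2 m n] using monQ m (n+1)) q hq,
      key (LinearMap.mulRight K x) (fun m n => by simpa [P3 m n] using monQ (m+1) n) q hq,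
      key (LinearMap.mulRight K y) (fun m n => by simpa [P4 m n] using monQ m (n+1)) q hq⟩
  have Qabs : ∀ b : B, ∀ q ∈ Q, b*q ∈ Q ∧ q*b ∈ Q := by
    have : ∀ g : FreeAlgebra K (Fin 2), ∀ q ∈ Q, π g * q ∈ Q ∧ q * π g ∈ Q := by
      intro g
      induction g using FreeAlgebra.induction with
      | grade0 r =>
        intro q hq
        rw [AlgHom.commutes]
        constructor
        · rw [← Algebra.smul_def]; exact Q.smul_mem r hq
        · rw [← Algebra.commutes, ← Algebra.smul_def]; exact Q.smul_mem r hq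
      | grade1 i =>
        intro q hq
        fin_cases i
        · show π (FreeAlgebra.ι K 0) * q ∈ Q ∧ q * π (FreeAlgebra.ι K 0) ∈ Q
          rw [← hx]; exact ⟨(Pc q hq).1, (Pc q hq).2.2.1⟩
        · show π (FreeAlgebra.ι K 1) * q ∈ Q ∧ q * π (FreeAlgebra.ι K 1) ∈ Q
          rw [← hy]; exact ⟨(Pc q hq).2.1, (Pc q hq).2.2.2⟩
      | mul a b iha ihb =>
        intro q hq
        rw [map_mul]
        constructor
        · rw [mul_assoc]; exact (iha _ ((ihb q hq).1)).1
        · rw [← mul_assoc]; exact (ihb _ ((iha q hq).2)).2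
      | add a b iha ihb =>
        intro q hq
        rw [map_add]
        constructor
        · rw [add_mul]; exact Q.add_mem (iha q hq).1 (ihb q hq).1
        · rw [mul_add]; exact Q.add_mem (iha q hq).2 (ihb q hq).2
    intro b q hq
    obtain ⟨g, rfl⟩ := hsurj b
    exact this g q hq
  have CommQ : ∀ a b : B, a*b - b*a ∈ Q := by
    have CA : ∀ a : B, a*x - x*a ∈ Q ∧ a*y - y*a ∈ Q := by
      intro a
      obtain ⟨g, rfl⟩ := hsurj a
      induction g using FreeAlgebra.induction with
      | grade0 r =>
        rw [AlgHom.commutes]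
        constructor
        · rw [← Algebra.commutes r x, sub_self]; exact Q.zero_mem
        · rw [← Algebra.commutes r y, sub_self]; exact Q.zero_mem
      | grade1 i =>
        fin_cases i
        · show π (FreeAlgebra.ι K 0)*x - x*π (FreeAlgebra.ι K 0) ∈ Q ∧
            π (FreeAlgebra.ι K 0)*y - y*π (FreeAlgebra.ι K 0) ∈ Q
          rw [← hx]
          constructor
          · rw [sub_self]; exact Q.zero_mem
          · have : x*y - y*x = c*x^0*y^0 := by rw [hc, pow_zero, pow_zero, mul_one, mul_one]
            rw [this]; exact monQ 0 0
        · show π (FreeAlgebra.ι K 1)*x - x*π (FreeAlgebra.ι K 1) ∈ Q ∧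
            π (FreeAlgebra.ι K 1)*y - y*π (FreeAlgebra.ι K 1) ∈ Q
          rw [← hy]
          constructor
          · have h0 : x*y - y*x = c*x^0*y^0 := by rw [hc, pow_zero, pow_zero, mul_one, mul_one]
            have : y*x - x*y = -(c*x^0*y^0) := by rw [← h0]; abel
            rw [this]; exact Q.neg_mem (monQ 0 0)
          · rw [sub_self]; exact Q.zero_mem
      | mul a b iha ihb =>
        rw [map_mul]
        constructor
        · have iden : (π a*π b)*x - x*(π a*π b)
              = π a*(π b*x - x*π b) + (π a*x - x*π a)*π b := by noncomm_ring
          rw [iden]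
          exact Q.add_mem (Qabs (π a) _ ihb.1).1 (Qabs (π b) _ iha.1).2
        · have iden : (π a*π b)*y - y*(π a*π b)
              = π a*(π b*y - y*π b) + (π a*y - y*π a)*π b := by noncomm_ring
          rw [iden]
          exact Q.add_mem (Qabs (π a) _ ihb.2).1 (Qabs (π b) _ iha.2).2
      | add a b iha ihb =>
        rw [map_add]
        constructor
        · have iden : (π a + π b)*x - x*(π a + π b)
              = (π a*x - x*π a) + (π b*x - x*π b) := by noncomm_ring
          rw [iden]; exact Q.add_mem iha.1 ihb.1
        · have iden : (π a + π b)*y - y*(π a + π b)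
              = (π a*y - y*π a) + (π b*y - y*π b) := by noncomm_ring
          rw [iden]; exact Q.add_mem iha.2 ihb.2
    intro a b
    obtain ⟨g, rfl⟩ := hsurj b
    induction g using FreeAlgebra.induction with
    | grade0 r =>
      rw [AlgHom.commutes, Algebra.commutes r a, sub_self]
      exact Q.zero_mem
    | grade1 i =>
      fin_cases i
      · show a * π (FreeAlgebra.ι K 0) - π (FreeAlgebra.ι K 0) * a ∈ Q
        rw [← hx]; exact (CA a).1
      · show a * π (FreeAlgebra.ι K 1) - π (FreeAlgebra.ι K 1) * a ∈ Q
        rw [← hy]; exact (CA a).2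
    | mul u v ihu ihv =>
      rw [map_mul]
      have iden : a*(π u*π v) - (π u*π v)*a
          = π u*(a*π v - π v*a) + (a*π u - π u*a)*π v := by noncomm_ring
      rw [iden]
      exact Q.add_mem (Qabs (π u) _ ihv).1 (Qabs (π v) _ ihu).2
    | add u v ihu ihv =>
      rw [map_add]
      have iden : a*(π u + π v) - (π u + π v)*a
          = (a*π u - π u*a) + (a*π v - π v*a) := by noncomm_ring
      rw [iden]
      exact Q.add_mem ihu ihv
  have T2Q : ∀ u ∈ Tideal B 2, u ∈ Q := by
    intro u hu
    set QI : TwoSidedIdeal B := TwoSidedIdeal.mk' (Q : Set B)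
      Q.zero_mem (fun h1 h2 => Q.add_mem h1 h2) (fun h1 => Q.neg_mem h1)
      (fun {a q} h1 => (Qabs a q h1).1) (fun {q a} h1 => (Qabs a q h1).2) with hQI
    have hmem : ∀ z : B, z ∈ QI ↔ z ∈ Q := fun z =>
      TwoSidedIdeal.mem_mk' _ _ _ _ _ _ z
    have hgen : { z : B | ∃ (a : B) (l : List B), l.length + 1 = 2 ∧ rnComm a l = z }
        ⊆ (QI : Set B) := by
      rintro _ ⟨a, l, hl, rfl⟩
      obtain ⟨b, rfl⟩ := List.length_eq_one_iff.mp (by omega : l.length = 1)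
      rw [SetLike.mem_coe, hmem]
      exact CommQ a b
    exact (hmem u).mp (TwoSidedIdeal.mem_span_iff.mp hu QI hgen)
  -- endomorphisms determined by images of x and y
  have endo : ∀ u v : B, ∃ φ : B →ₐ[K] B, φ x = u ∧ φ y = v := by
    intro u v
    obtain ⟨φ, h1, h2⟩ := aux_exists_endo π hsurj (fun f hf => (hker f).1 hf) t3 u v
    exact ⟨φ, by rw [hx]; exact h1, by rw [hy]; exact h2⟩
  have endo_img : ∀ (φ : B →ₐ[K] B) (m n : ℕ),
      φ (c*x^m*y^n) = (φ x*φ y - φ y*φ x)*(φ x)^m*(φ y)^n := by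
    intro φ m n
    rw [hc]
    simp only [map_mul, map_sub, map_pow]
  have SC : ∀ (α β : K) (m n : ℕ) (φ : B →ₐ[K] B), φ x = α•x → φ y = β•y →
      φ (c*x^m*y^n) = (α^(m+1)*β^(n+1)) • (c*x^m*y^n) := by
    intro α β m n φ h1 h2
    rw [endo_img φ m n, h1, h2]
    have e1 : (α•x)*(β•y) - (β•y)*(α•x) = (α*β) • c := by
      rw [smul_mul_smul_comm, smul_mul_smul_comm, mul_comm β α, ← smul_sub, hc]
    rw [e1, smul_pow, smul_pow, smul_mul_smul_comm, smul_mul_smul_comm]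
    congr 1
    ring
  have smul_cancel : ∀ (W : Submodule K B) (a : K) (w : B), a ≠ 0 → a • w ∈ W → w ∈ W := by
    intro W a w ha h
    have h2 := W.smul_mem a⁻¹ h
    rwa [smul_smul, inv_mul_cancel₀ ha, one_smul] at h2
  have natK : ∀ N : ℕ, ¬ (p ∣ N) → ((N : K) ≠ 0) := by
    intro N h hN
    exact h ((CharP.cast_eq_zero_iff K p N).mp hN)
  have CompS : ∀ (W : Submodule K B), IsTSpace K W → ∀ l : (ℕ×ℕ) →₀ K,
      (∑ t ∈ l.support, l t • (c*x^t.1*y^t.2)) ∈ W →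
      ∀ t ∈ l.support, l t • (c*x^t.1*y^t.2) ∈ W := by
    intro W hWT l hsum
    apply ext2 W l.support (fun t => l t • (c*x^t.1*y^t.2)) (fun t => t.1+1) (fun t => t.2+1)
    · rintro ⟨t1, t2⟩ _ ⟨t1', t2'⟩ _ h1 h2
      simp only [Prod.mk.injEq]
      omega
    · intro α β
      obtain ⟨φ, hφx, hφy⟩ := endo (α•x) (β•y)
      have h1 := hWT φ _ hsum
      rw [map_sum] at h1
      have e : ∀ t ∈ l.support, φ (l t • (c*x^t.1*y^t.2))
          = (α^(t.1+1)*β^(t.2+1)) • (l t • (c*x^t.1*y^t.2)) := by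
        intro t _
        rw [map_smul, SC α β t.1 t.2 φ hφx hφy, smul_comm]
      rwa [Finset.sum_congr rfl e] at h1
  -- binomial expansion
  have BinExp : ∀ (z : B) (α : K) (m : ℕ),
      (z + α•(1:B))^m = ∑ i ∈ Finset.range (m+1), ((m.choose i : K) * α^(m-i)) • z^i := by
    intro z α m
    have hcom : Commute z (α•(1:B)) := by
      unfold Commute SemiconjBy
      rw [mul_smul_comm, smul_mul_assoc, one_mul, mul_one]
    rw [hcom.add_pow]
    refine Finset.sum_congr rfl fun i hi => ?_
    rw [smul_pow, one_pow, mul_smul_comm, mul_one, ← nsmul_eq_mul',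
      ← Nat.cast_smul_eq_nsmul K, smul_smul]
  have TR : ∀ α β : K, (x + α•(1:B))*(y + β•(1:B)) - (y + β•(1:B))*(x + α•(1:B)) = c := by
    intro α β
    rw [hc]
    simp only [mul_add, add_mul, mul_smul_comm, smul_mul_assoc, one_mul, mul_one, smul_add,
      smul_smul]
    rw [show β * α = α * β from mul_comm β α]
    abel
  -- translation components
  have CompT : ∀ (W : Submodule K B), IsTSpace K W → ∀ m n : ℕ, (c*x^m*y^n) ∈ W →
      ∀ i j : ℕ, i ≤ m → j ≤ n →
      ((m.choose i : K) * (n.choose j : K)) • (c*x^i*y^j) ∈ W := by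
    intro W hWT m n hmem i j him hjn
    have key := ext2 W (Finset.range (m+1) ×ˢ Finset.range (n+1))
      (fun t => ((m.choose (m - t.1) : K) * (n.choose (n - t.2) : K)) • (c*x^(m-t.1)*y^(n-t.2)))
      (fun t => t.1) (fun t => t.2)
      (by rintro ⟨t1, t2⟩ _ ⟨t1', t2'⟩ _ h1 h2; dsimp only at h1 h2
          simp only [Prod.mk.injEq]; omega)
      ?_ (m - i, n - j)
      (by simp only [Finset.mem_product, Finset.mem_range]; omega)
    · simpa only [Nat.sub_sub_self him, Nat.sub_sub_self hjn] using key
    intro α β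
    obtain ⟨φ, hφx, hφy⟩ := endo (x + α•(1:B)) (y + β•(1:B))
    have h0 := hWT φ _ hmem
    rw [endo_img φ m n, hφx, hφy, TR α β, BinExp x α m, BinExp y β n] at h0
    have expand : c * (∑ i ∈ Finset.range (m+1), ((m.choose i : K) * α^(m-i)) • x^i)
        * (∑ j ∈ Finset.range (n+1), ((n.choose j : K) * β^(n-j)) • y^j)
        = ∑ i ∈ Finset.range (m+1), ∑ j ∈ Finset.range (n+1),
            (((m.choose i : K) * α^(m-i)) * ((n.choose j : K) * β^(n-j))) • (c*x^i*y^j) := by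
      have e1 : c * (∑ i ∈ Finset.range (m+1), ((m.choose i : K) * α^(m-i)) • x^i)
          = ∑ i ∈ Finset.range (m+1), ((m.choose i : K) * α^(m-i)) • (c*x^i) := by
        rw [Finset.mul_sum]
        exact Finset.sum_congr rfl fun i _ => mul_smul_comm _ _ _
      rw [e1, Finset.sum_mul]
      refine Finset.sum_congr rfl fun i _ => ?_
      rw [Finset.mul_sum]
      refine Finset.sum_congr rfl fun j _ => ?_
      rw [smul_mul_smul_comm]
    rw [expand] at h0
    have refl1 : ∑ i ∈ Finset.range (m+1), ∑ j ∈ Finset.range (n+1),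
        (((m.choose i : K) * α^(m-i)) * ((n.choose j : K) * β^(n-j))) • (c*x^i*y^j)
        = ∑ i ∈ Finset.range (m+1), ∑ j ∈ Finset.range (n+1),
        (((m.choose (m-i) : K) * α^(m-(m-i))) * ((n.choose (n-j) : K) * β^(n-(n-j)))) •
          (c*x^(m-i)*y^(n-j)) := by
      rw [← Finset.sum_range_reflect]
      refine Finset.sum_congr rfl fun i hi => ?_
      rw [← Finset.sum_range_reflect]
      refine Finset.sum_congr rfl fun j hj => ?_
      have e1 : m + 1 - 1 - i = m - i := by omega
      have e2 : n + 1 - 1 - j = n - j := by omega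
      rw [e1, e2]
    rw [refl1] at h0
    have coefeq : ∀ i ∈ Finset.range (m+1), ∀ j ∈ Finset.range (n+1),
        (((m.choose (m-i) : K) * α^(m-(m-i))) * ((n.choose (n-j) : K) * β^(n-(n-j)))) •
          (c*x^(m-i)*y^(n-j))
        = (α^i * β^j) • (((m.choose (m-i) : K) * (n.choose (n-j) : K)) • (c*x^(m-i)*y^(n-j))) := by
      intro i hi j hj
      rw [Finset.mem_range] at hi hj
      have e1 : m-(m-i) = i := by omega
      have e2 : n-(n-j) = j := by omega
      rw [e1, e2, smul_smul]
      congr 1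
      ring
    rw [Finset.sum_congr rfl (fun i hi => Finset.sum_congr rfl (fun j hj => coefeq i hi j hj))] at h0
    rw [← Finset.sum_product'] at h0
    exact h0
  -- VMx, VMy
  have VMx : ∀ m n k : ℕ, (c*x^m*y^n)*x^k = c*x^(m+k)*y^n := by
    intro m n k
    have h0 := VM m n k 0
    simpa using h0
  have VMy : ∀ m n l : ℕ, (c*x^m*y^n)*y^l = c*x^m*y^(n+l) := by
    intro m n l
    have h0 := VM m n 0 l
    simpa using h0
  -- the generating set and its T-space
  set SS : Set B := {c} ∪ {w : B | (∃ s₁ s₂ : ℕ, 1 ≤ s₁ ∧ 1 ≤ s₂ ∧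
      w = c * x ^ (p ^ s₁ - 1) * y ^ (p ^ s₂ - 1)) ∧ w ∈ U} with hSS
  have hmemV : ∀ u : B, u ∈ TSpaceGen K SS ↔
      ∀ W : Submodule K B, (IsTSpace K W ∧ SS ⊆ W) → u ∈ W := fun u => Submodule.mem_sInf
  have hSV : SS ⊆ (TSpaceGen K SS : Set B) := fun w hw =>
    (hmemV w).mpr fun W hW => hW.2 hw
  have hVT : IsTSpace K (TSpaceGen K SS) := by
    intro φ u hu
    exact (hmemV _).mpr fun W hW => hW.1 φ u ((hmemV u).mp hu W hW)
  have hcV : c ∈ TSpaceGen K SS := hSV (Or.inl rfl)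
  -- Case A
  have caseA1 : ∀ m n : ℕ, ¬ p ∣ (m+1) → (c*x^m*y^n) ∈ TSpaceGen K SS := by
    intro m n hnd
    obtain ⟨φ, hφx, hφy⟩ := endo y (x^(m+1)*y^n)
    have hφc : φ c = -((m+1) • (c*x^m*y^n)) := by
      have e0 : φ c = φ x*φ y - φ y*φ x := by rw [hc, map_sub, map_mul, map_mul]
      rw [e0, hφx, hφy]
      have e1 : y*(x^(m+1)*y^n) = x^(m+1)*y^(n+1) - (m+1)•(c*x^m*y^n) := by
        rw [← mul_assoc, L1, sub_mul, smul_mul_assoc, mul_assoc, ← pow_succ']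
      have e2 : (x^(m+1)*y^n)*y = x^(m+1)*y^(n+1) := by rw [mul_assoc, ← pow_succ]
      rw [e1, e2]
      abel
    have h2 := hVT φ c hcV
    rw [hφc] at h2
    have h3 : (m+1) • (c*x^m*y^n) ∈ TSpaceGen K SS := (Submodule.neg_mem_iff _).mp h2
    rw [← Nat.cast_smul_eq_nsmul K] at h3
    exact smul_cancel _ _ _ (natK (m+1) hnd) h3
  have caseA2 : ∀ m n : ℕ, ¬ p ∣ (n+1) → (c*x^m*y^n) ∈ TSpaceGen K SS := by
    intro m n hnd
    obtain ⟨φ, hφx, hφy⟩ := endo (x^m*y^(n+1)) x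
    have hφc : φ c = -((n+1) • (c*x^m*y^n)) := by
      have e0 : φ c = φ x*φ y - φ y*φ x := by rw [hc, map_sub, map_mul, map_mul]
      rw [e0, hφx, hφy]
      have e1 : (x^m*y^(n+1))*x = x^(m+1)*y^(n+1) - (n+1)•(c*x^m*y^n) := by
        rw [mul_assoc, L2, mul_sub, mul_smul_comm, ← mul_assoc, ← pow_succ,
          Hmove (x^m) (y^n), ← mul_assoc c (x^m) (y^n)]
      have e2 : x*(x^m*y^(n+1)) = x^(m+1)*y^(n+1) := by rw [← mul_assoc, ← pow_succ']
      rw [e1, e2]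
      abel
    have h2 := hVT φ c hcV
    rw [hφc] at h2
    have h3 : (n+1) • (c*x^m*y^n) ∈ TSpaceGen K SS := (Submodule.neg_mem_iff _).mp h2
    rw [← Nat.cast_smul_eq_nsmul K] at h3
    exact smul_cancel _ _ _ (natK (n+1) hnd) h3
  -- [x,y] belongs to U
  haveI : Fact p.Prime := ⟨hp⟩
  have hcU : c ∈ U := by
    obtain ⟨u0, hu0U, hu0ne⟩ := (Submodule.ne_bot_iff U).mp hUne
    have hQ0 := T2Q u0 (hUsub u0 hu0U)
    rw [hQ] at hQ0
    obtain ⟨l, hl⟩ := Finsupp.mem_span_range_iff_exists_finsupp.mp hQ0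
    have hl2 : (∑ t ∈ l.support, l t • (c*x^t.1*y^t.2)) = u0 := hl
    have hterm := CompS U hU l (by rw [hl2]; exact hu0U)
    have hex : ∃ t ∈ l.support, l t • (c*x^t.1*y^t.2) ≠ 0 := by
      by_contra hco
      push_neg at hco
      exact hu0ne (by rw [← hl2]; exact Finset.sum_eq_zero hco)
    obtain ⟨t, htsupp, htne⟩ := hex
    have hmon : (c*x^t.1*y^t.2) ∈ U := by
      have hlt : l t ≠ 0 := fun h0 => htne (by rw [h0, zero_smul])
      exact smul_cancel U _ _ hlt (hterm t htsupp)
    have h2 := CompT U hU t.1 t.2 hmon 0 0 (Nat.zero_le _) (Nat.zero_le _)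
    simpa using h2
  have VleU : TSpaceGen K SS ≤ U := by
    intro w hw
    refine (hmemV w).mp hw U ⟨hU, ?_⟩
    rintro z (hz | hz)
    · rw [Set.mem_singleton_iff] at hz
      rw [hz]; exact hcU
    · exact hz.2
  -- main monomial lemma
  have MonV : ∀ m n : ℕ, (c*x^m*y^n) ∈ U → (c*x^m*y^n) ∈ TSpaceGen K SS := by
    intro m n hmU
    by_cases h1 : p ∣ (m+1)
    swap
    · exact caseA1 m n h1
    by_cases h2 : p ∣ (n+1)
    swap
    · exact caseA2 m n h2
    have hm0 : m+1 ≠ 0 := by omega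
    have hn0 : n+1 ≠ 0 := by omega
    obtain ⟨s₁, a, hs₁pos, hmul1, hpa⟩ : ∃ s₁ a, 1 ≤ s₁ ∧ p^s₁ * a = m+1 ∧ ¬ p ∣ a :=
      ⟨(m+1).factorization p, (m+1)/p^((m+1).factorization p),
        hp.factorization_pos_of_dvd hm0 h1,
        Nat.ordProj_mul_ordCompl_eq_self _ p, Nat.not_dvd_ordCompl hp hm0⟩
    obtain ⟨s₂, b, hs₂pos, hmul2, hpb⟩ : ∃ s₂ b, 1 ≤ s₂ ∧ p^s₂ * b = n+1 ∧ ¬ p ∣ b :=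
      ⟨(n+1).factorization p, (n+1)/p^((n+1).factorization p),
        hp.factorization_pos_of_dvd hn0 h2,
        Nat.ordProj_mul_ordCompl_eq_self _ p, Nat.not_dvd_ordCompl hp hn0⟩
    have hapos : 1 ≤ a := by
      rcases Nat.eq_zero_or_pos a with h | h
      · rw [h, mul_zero] at hmul1; omega
      · exact h
    have hbpos : 1 ≤ b := by
      rcases Nat.eq_zero_or_pos b with h | h
      · rw [h, mul_zero] at hmul2; omega
      · exact h
    have hq₁m : p^s₁ - 1 ≤ m := by
      have := Nat.le_mul_of_pos_right (p^s₁) hapos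
      omega
    have hq₂n : p^s₂ - 1 ≤ n := by
      have := Nat.le_mul_of_pos_right (p^s₂) hbpos
      omega
    have hspecU : (c*x^(p^s₁-1)*y^(p^s₂-1)) ∈ U := by
      have hcoef := CompT U hU m n hmU (p^s₁-1) (p^s₂-1) hq₁m hq₂n
      have hzm : ((m.choose (p^s₁-1) : ℕ) : ZMod p) = 1 := by
        have hm' : m = p^s₁ * a - 1 := by omega
        rw [hm']
        exact choose_zmod_eq_one p hp (by omega) s₁ a hapos
      have hzn : ((n.choose (p^s₂-1) : ℕ) : ZMod p) = 1 := by
        have hn' : n = p^s₂ * b - 1 := by omega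
        rw [hn']
        exact choose_zmod_eq_one p hp (by omega) s₂ b hbpos
      have hKm : ((m.choose (p^s₁-1) : K)) ≠ 0 := by
        intro h0
        have hdvd : p ∣ m.choose (p^s₁-1) := (CharP.cast_eq_zero_iff K p _).mp h0
        have h3 : ((m.choose (p^s₁-1) : ℕ) : ZMod p) = 0 :=
          (ZMod.natCast_eq_zero_iff _ p).mpr hdvd
        rw [hzm] at h3
        exact one_ne_zero h3
      have hKn : ((n.choose (p^s₂-1) : K)) ≠ 0 := by
        intro h0
        have hdvd : p ∣ n.choose (p^s₂-1) := (CharP.cast_eq_zero_iff K p _).mp h0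
        have h3 : ((n.choose (p^s₂-1) : ℕ) : ZMod p) = 0 :=
          (ZMod.natCast_eq_zero_iff _ p).mpr hdvd
        rw [hzn] at h3
        exact one_ne_zero h3
      exact smul_cancel U _ _ (mul_ne_zero hKm hKn) hcoef
    have hspecV : (c*x^(p^s₁-1)*y^(p^s₂-1)) ∈ TSpaceGen K SS :=
      hSV (Or.inr ⟨⟨s₁, s₂, hs₁pos, hs₂pos, rfl⟩, hspecU⟩)
    obtain ⟨φ, hφx, hφy⟩ := endo (x^a) (y^b)
    have himg : φ (c*x^(p^s₁-1)*y^(p^s₂-1)) = (a*b) • (c*x^m*y^n) := by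
      rw [endo_img, hφx, hφy, ← pow_mul, ← pow_mul]
      obtain ⟨a', rfl⟩ : ∃ a', a = a'+1 := ⟨a-1, by omega⟩
      obtain ⟨b', rfl⟩ : ∃ b', b = b'+1 := ⟨b-1, by omega⟩
      rw [CM a' b', smul_mul_assoc, smul_mul_assoc, VMx, VMy]
      have ea : a' + (a'+1)*(p^s₁-1) = m := by
        have h' : (a'+1)*(p^s₁-1) + (a'+1) = (a'+1)*(p^s₁) := by
          have hq : p^s₁ - 1 + 1 = p^s₁ := by
            have := Nat.one_le_pow s₁ p hp.pos
            omega
          calc (a'+1)*(p^s₁-1) + (a'+1) = (a'+1)*((p^s₁-1)+1) := by ring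
            _ = (a'+1)*(p^s₁) := by rw [hq]
        have hmul1' : (a'+1)*(p^s₁) = m+1 := by rw [mul_comm]; exact hmul1
        omega
      have eb : b' + (b'+1)*(p^s₂-1) = n := by
        have h' : (b'+1)*(p^s₂-1) + (b'+1) = (b'+1)*(p^s₂) := by
          have hq : p^s₂ - 1 + 1 = p^s₂ := by
            have := Nat.one_le_pow s₂ p hp.pos
            omega
          calc (b'+1)*(p^s₂-1) + (b'+1) = (b'+1)*((p^s₂-1)+1) := by ring
            _ = (b'+1)*(p^s₂) := by rw [hq]
        have hmul2' : (b'+1)*(p^s₂) = n+1 := by rw [mul_comm]; exact hmul2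
        omega
      rw [ea, eb]
    have hφV := hVT φ _ hspecV
    rw [himg] at hφV
    rw [← Nat.cast_smul_eq_nsmul K] at hφV
    have hab : ¬ p ∣ (a*b) := by
      intro hd
      rcases (Nat.Prime.dvd_mul hp).mp hd with h | h
      · exact hpa h
      · exact hpb h
    exact smul_cancel _ _ _ (natK (a*b) hab) hφV
  -- conclusion
  apply le_antisymm
  · intro u hu
    have huQ := T2Q u (hUsub u hu)
    rw [hQ] at huQ
    obtain ⟨l, hl⟩ := Finsupp.mem_span_range_iff_exists_finsupp.mp huQ
    have hl2 : (∑ t ∈ l.support, l t • (c*x^t.1*y^t.2)) = u := hl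
    rw [← hl2]
    apply Submodule.sum_mem
    intro t ht
    have hterm := CompS U hU l (by rw [hl2]; exact hu) t ht
    have hlt : l t ≠ 0 := Finsupp.mem_support_iff.mp ht
    have hmon : (c*x^t.1*y^t.2) ∈ U := smul_cancel U _ _ hlt hterm
    exact Submodule.smul_mem _ _ (MonV t.1 t.2 hmon)
  · exact VleU
end
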